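/- arXiv:math/0505641 — 8 statements merged into one kernel-verified Lean document; each statement's English description precedes it below -/
import Mathlib

section
/- Let t, n, p be positive integers with 3 ≤ p ≤ t+1. If d is a totally balanced test-control incomplete crossover design with t test treatments, a control treatment, n units, p periods, and r_{d0} = n, then pt divides n(p−1) and pt(t−1) divides n(p−1)(p−2). -/
/-!
With `r_{d0} = n`, condition (iv) puts `n/p` controls and `L = n(p-1)/(tp)` copies of each test
treatment in every period, which is the first divisibility. The carryover counts `m_{ij}` form a
matrix whose column `j` sums to `r̃_{dj}` and whose row `i` sums to the number of appearances of
`i` in periods `2,…,p`. Column `0` gives `t m_{10} = r̃_{d0} = (p-1)n/p`, i.e. `m_{10} = L`, and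
row `1` gives `m_{10} + (t-1) m_{12} = (p-1)L`; hence `tp(t-1) m_{12} = tp(p-2)L = n(p-1)(p-2)`.
-/

open Finset

/-- Number of periods (among the `p` periods, 0-indexed `0,…,p-1`) in which unit `u`
receives treatment `i` under design `d`. -/
def nC (d : ℕ → ℕ → ℕ) (p i u : ℕ) : ℕ :=
  ((Finset.range p).filter fun k => d k u = i).card

/-- Number of periods among the first `p-1` periods in which unit `u` receives
treatment `i` under design `d`. -/
def nT (d : ℕ → ℕ → ℕ) (p i u : ℕ) : ℕ :=
  ((Finset.range (p - 1)).filter fun k => d k u = i).card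

/-- Number of units (among `n` units) receiving treatment `i` in period `k`. -/
def lC (d : ℕ → ℕ → ℕ) (n i k : ℕ) : ℕ :=
  ((Finset.range n).filter fun u => d k u = i).card

/-- Number of appearances of treatment `i` immediately preceded by treatment `j`. -/
def mC (d : ℕ → ℕ → ℕ) (p n i j : ℕ) : ℕ :=
  ∑ u ∈ Finset.range n,
    ((Finset.range (p - 1)).filter fun k => d (k + 1) u = i ∧ d k u = j).card

/-- Total replication of treatment `i` in the design. -/
def rC (d : ℕ → ℕ → ℕ) (p n i : ℕ) : ℕ := ∑ u ∈ Finset.range n, nC d p i u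

/-- Total replication of treatment `i` in the first `p-1` periods. -/
def rT (d : ℕ → ℕ → ℕ) (p n i : ℕ) : ℕ := ∑ u ∈ Finset.range n, nT d p i u

/-- A totally balanced test-control incomplete crossover design with test treatments
`1,…,t`, control treatment `0`, `n` units and `p` periods. -/
structure IsTotallyBalanced (t n p : ℕ) (d : ℕ → ℕ → ℕ) : Prop where
  -- (i) balanced test-control incomplete block design for the direct effects
  rep_eq : ∀ i ∈ Finset.Icc 1 t, ∀ j ∈ Finset.Icc 1 t, rC d p n i = rC d p n j
  once : ∀ i ∈ Finset.Icc 1 t, ∀ u < n, nC d p i u ≤ 1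
  pair_eq : ∀ i ∈ Finset.Icc 1 t, ∀ j ∈ Finset.Icc 1 t, ∀ i' ∈ Finset.Icc 1 t,
    ∀ j' ∈ Finset.Icc 1 t, i ≠ j → i' ≠ j' →
    ((Finset.range n).filter fun u => 1 ≤ nC d p i u ∧ 1 ≤ nC d p j u).card =
      ((Finset.range n).filter fun u => 1 ≤ nC d p i' u ∧ 1 ≤ nC d p j' u).card
  ctrl_rep : ∀ u < n, nC d p 0 u = rC d p n 0 / n ∨ nC d p 0 u = rC d p n 0 / n + 1
  ctrl_pair : ∀ i ∈ Finset.Icc 1 t, ∀ j ∈ Finset.Icc 1 t,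
    ((Finset.range n).filter fun u => nC d p 0 u = rC d p n 0 / n ∧ 1 ≤ nC d p i u).card =
      ((Finset.range n).filter fun u => nC d p 0 u = rC d p n 0 / n ∧ 1 ≤ nC d p j u).card
  -- (ii) balanced test-control incomplete block design for the carryover effects
  rep_eq' : ∀ i ∈ Finset.Icc 1 t, ∀ j ∈ Finset.Icc 1 t, rT d p n i = rT d p n j
  once' : ∀ i ∈ Finset.Icc 1 t, ∀ u < n, nT d p i u ≤ 1
  pair_eq' : ∀ i ∈ Finset.Icc 1 t, ∀ j ∈ Finset.Icc 1 t, ∀ i' ∈ Finset.Icc 1 t,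
    ∀ j' ∈ Finset.Icc 1 t, i ≠ j → i' ≠ j' →
    ((Finset.range n).filter fun u => 1 ≤ nT d p i u ∧ 1 ≤ nT d p j u).card =
      ((Finset.range n).filter fun u => 1 ≤ nT d p i' u ∧ 1 ≤ nT d p j' u).card
  ctrl_rep' : ∀ u < n, nT d p 0 u = rT d p n 0 / n ∨ nT d p 0 u = rT d p n 0 / n + 1
  ctrl_pair' : ∀ i ∈ Finset.Icc 1 t, ∀ j ∈ Finset.Icc 1 t,
    ((Finset.range n).filter fun u => nT d p 0 u = rT d p n 0 / n ∧ 1 ≤ nT d p i u).card =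
      ((Finset.range n).filter fun u => nT d p 0 u = rT d p n 0 / n ∧ 1 ≤ nT d p j u).card
  -- (iii) balanced for test-control carryover effects
  carry_eq : ∀ i ∈ Finset.Icc 1 t, ∀ j ∈ Finset.Icc 1 t, ∀ i' ∈ Finset.Icc 1 t,
    ∀ j' ∈ Finset.Icc 1 t, i ≠ j → i' ≠ j' → mC d p n i j = mC d p n i' j'
  carry_ctrl_by_test : ∀ i ∈ Finset.Icc 1 t, ∀ j ∈ Finset.Icc 1 t,
    mC d p n 0 i = mC d p n 0 j
  carry_test_by_ctrl : ∀ i ∈ Finset.Icc 1 t, ∀ j ∈ Finset.Icc 1 t,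
    mC d p n i 0 = mC d p n j 0
  no_self : ∀ i ≤ t, mC d p n i i = 0
  -- (iv) proportional frequency design for test-control on the periods
  period_test : ∀ i ∈ Finset.Icc 1 t, ∀ k < p, t * p * lC d n i k = n * p - rC d p n 0
  period_ctrl : ∀ k < p, p * lC d n 0 k = rC d p n 0
  -- (v)
  v_test_test : ∀ i ∈ Finset.Icc 1 t, ∀ j ∈ Finset.Icc 1 t, ∀ i' ∈ Finset.Icc 1 t,
    ∀ j' ∈ Finset.Icc 1 t, i ≠ j → i' ≠ j' →
    ((Finset.range n).filter fun u => nT d p j u = 1 ∧ nC d p i u = 1).card =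
      ((Finset.range n).filter fun u => nT d p j' u = 1 ∧ nC d p i' u = 1).card
  v_ctrl_test : ∀ i ∈ Finset.Icc 1 t, ∀ j ∈ Finset.Icc 1 t,
    ((Finset.range n).filter fun u => nT d p 0 u = rT d p n 0 / n ∧ nC d p i u = 1).card =
      ((Finset.range n).filter fun u => nT d p 0 u = rT d p n 0 / n ∧ nC d p j u = 1).card
  v_test_ctrl : ∀ i ∈ Finset.Icc 1 t, ∀ j ∈ Finset.Icc 1 t,
    ((Finset.range n).filter fun u => nT d p i u = 1 ∧ nC d p 0 u = rC d p n 0 / n).card =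
      ((Finset.range n).filter fun u => nT d p j u = 1 ∧ nC d p 0 u = rC d p n 0 / n).card

lemma Finset.sum_range_succ_eq_add_sum_Icc {M : Type*} [AddCommMonoid M] (f : ℕ → M) (t : ℕ) :
    ∑ i ∈ range (t + 1), f i = f 0 + ∑ i ∈ Icc 1 t, f i := by
  rw [range_eq_Ico, sum_eq_sum_Ico_succ_bot t.succ_pos, zero_add, Nat.succ_eq_add_one,
    Ico_add_one_right_eq_Icc]

section CarryoverCounts

variable {d : ℕ → ℕ → ℕ} {t n p : ℕ}

lemma rT_eq_sum_lC (j : ℕ) :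
    rT d p n j = ∑ k ∈ range (p - 1), lC d n j k := by
  simp only [rT, nT, lC, card_filter]
  exact sum_comm

lemma sum_mC_left_eq_rT (hd : ∀ k < p, ∀ u < n, d k u ≤ t) (j : ℕ) :
    ∑ i ∈ range (t + 1), mC d p n i j = rT d p n j := by
  simp only [mC, rT, nT]
  rw [sum_comm]
  refine sum_congr rfl fun u hu => ?_
  rw [card_eq_sum_card_fiberwise (f := fun k => d (k + 1) u) (t := range (t + 1))]
  · simp only [filter_filter, and_comm]
  · intro k hk
    simp only [coe_filter, mem_range, Set.mem_ofPred_eq] at hk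
    simpa [Nat.lt_succ_iff] using hd (k + 1) (by omega) u (mem_range.1 hu)

lemma sum_mC_right_eq_sum_lC (hd : ∀ k < p, ∀ u < n, d k u ≤ t) (i : ℕ) :
    ∑ j ∈ range (t + 1), mC d p n i j = ∑ k ∈ range (p - 1), lC d n i (k + 1) := by
  simp only [mC, lC]
  rw [sum_comm]
  have hfiber : ∀ u ∈ range n, ∑ j ∈ range (t + 1),
      #{k ∈ range (p - 1) | d (k + 1) u = i ∧ d k u = j} =
        #{k ∈ range (p - 1) | d (k + 1) u = i} := by
    intro u hu
    rw [card_eq_sum_card_fiberwise (f := fun k => d k u) (t := range (t + 1))]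
    · simp only [filter_filter]
    · intro k hk
      simp only [coe_filter, mem_range, Set.mem_ofPred_eq] at hk
      simpa [Nat.lt_succ_iff] using hd k (by omega) u (mem_range.1 hu)
  rw [sum_congr rfl hfiber]
  simp only [card_filter]
  exact sum_comm

end CarryoverCounts

namespace IsTotallyBalanced

variable {d : ℕ → ℕ → ℕ} {t n p i j : ℕ} (htb : IsTotallyBalanced t n p d)
include htb

lemma mul_lC_test_eq (hr : rC d p n 0 = n) (hi : i ∈ Icc 1 t) {k : ℕ} (hk : k < p) :
    t * p * lC d n i k = n * (p - 1) := by
  rw [htb.period_test i hi k hk, hr, Nat.mul_sub_one]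

lemma mul_rT_ctrl_eq (hr : rC d p n 0 = n) : p * rT d p n 0 = (p - 1) * n := by
  rw [rT_eq_sum_lC, mul_sum,
    sum_congr rfl fun k hk => (htb.period_ctrl k (by have := mem_range.1 hk; omega)).trans hr,
    sum_const, card_range, smul_eq_mul]

lemma mul_mC_test_ctrl_eq_rT (hd : ∀ k < p, ∀ u < n, d k u ≤ t) (hi : i ∈ Icc 1 t) :
    t * mC d p n i 0 = rT d p n 0 := by
  rw [← sum_mC_left_eq_rT hd, sum_range_succ_eq_add_sum_Icc, htb.no_self 0 t.zero_le, zero_add,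
    sum_const_nat fun i' hi' => htb.carry_test_by_ctrl i' hi' i hi, Nat.card_Icc,
    Nat.add_sub_cancel]

lemma mC_test_ctrl_add_mul_mC_test_eq (hd : ∀ k < p, ∀ u < n, d k u ≤ t) (hi : i ∈ Icc 1 t)
    (hj : j ∈ Icc 1 t) (hij : i ≠ j) :
    mC d p n i 0 + (t - 1) * mC d p n i j = ∑ k ∈ range (p - 1), lC d n i (k + 1) := by
  rw [← sum_mC_right_eq_sum_lC hd, sum_range_succ_eq_add_sum_Icc, ← add_sum_erase _ _ hi,
    htb.no_self i (mem_Icc.1 hi).2, zero_add,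
    sum_const_nat fun j' hj' => htb.carry_eq i hi j' (mem_of_mem_erase hj') i hi j hj
      (ne_of_mem_erase hj').symm hij,
    card_erase_of_mem hi, Nat.card_Icc, Nat.add_sub_cancel]

end IsTotallyBalanced

theorem stmt0_general (t n p : ℕ) (hp : 3 ≤ p) (hpt : p ≤ t + 1)
    (d : ℕ → ℕ → ℕ) (hd : ∀ k < p, ∀ u < n, d k u ≤ t)
    (htb : IsTotallyBalanced t n p d) (hr : rC d p n 0 = n) :
    p * t ∣ n * (p - 1) ∧ p * t * (t - 1) ∣ n * (p - 1) * (p - 2) := by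
  have h1 : 1 ∈ Icc 1 t := mem_Icc.2 ⟨le_rfl, by omega⟩
  have h2 : 2 ∈ Icc 1 t := mem_Icc.2 ⟨by norm_num, by omega⟩
  set b := mC d p n 1 0
  set m := mC d p n 1 2
  have hL : t * p * lC d n 1 0 = n * (p - 1) := htb.mul_lC_test_eq hr h1 (by omega)
  have hb : p * t * b = (p - 1) * n := by
    rw [mul_assoc, htb.mul_mC_test_ctrl_eq_rT hd h1, htb.mul_rT_ctrl_eq hr]
  have hrow : t * p * (b + (t - 1) * m) = (p - 1) * (n * (p - 1)) := by
    rw [htb.mC_test_ctrl_add_mul_mC_test_eq hd h1 h2 (by norm_num), mul_sum,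
      sum_congr rfl fun k hk => htb.mul_lC_test_eq hr h1 (by have := mem_range.1 hk; omega),
      sum_const, card_range, smul_eq_mul]
  have hp1 : p - 1 = p - 2 + 1 := by omega
  refine ⟨⟨lC d n 1 0, by rw [← hL]; ring⟩, ⟨m, ?_⟩⟩
  rw [hp1] at hb hrow ⊢
  linarith

/-- If `d` is a totally balanced test-control incomplete crossover design with `t` test
treatments, a control treatment, `n` units, `p` periods (`3 ≤ p ≤ t+1`) and control
replication `r_{d0} = n`, then `pt ∣ n(p-1)` and `pt(t-1) ∣ n(p-1)(p-2)`. -/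
theorem stmt0 (t n p : ℕ) (ht : 0 < t) (hn : 0 < n) (hp : 3 ≤ p) (hpt : p ≤ t + 1)
    (d : ℕ → ℕ → ℕ) (hd : ∀ k < p, ∀ u < n, d k u ≤ t)
    (htb : IsTotallyBalanced t n p d) (hr : rC d p n 0 = n) :
    p * t ∣ n * (p - 1) ∧ p * t * (t - 1) ∣ n * (p - 1) * (p - 2) :=
  stmt0_general t n p hp hpt d hd htb hr
end

section
/- Let t ≥ 3 and m ≥ 1, and suppose d₀ is a balanced uniform crossover design with t treatments labeled 1,…,t, m units, and t periods. For each i = 1,…,t, let d_i be the design obtained from d₀ by replacing every occurrence of treatment i by the control label 0, and let d be the juxtaposition of d₁,…,d_t (a design on n = tm units and p = t periods). Then d is a totally balanced test-control incomplete crossover design with t test treatments, a control treatment, n = tm units, p = t periods, and r_{d0} = tm. -/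
/-!
Unit `u` of the juxtaposition is unit `u % m` of the copy of `d₀` in which treatment
`u / m + 1` has been replaced by the control. Every count of the new design is a sum over the
`t` copies; within one copy, a count that involves the replaced treatment vanishes, and any
other count equals the corresponding count of `d₀`, with the control standing in for the
replaced treatment. So each quantity is `t - s` times a quantity of `d₀`, where `s` is the
number of test treatments involved, and uniformity and carryover balance of `d₀` make the
latter independent of the treatments.
-/

open Finset

theorem sum_range_mul_div_mod (t m : ℕ) (f : ℕ → ℕ → ℕ) :
    ∑ u ∈ range (t * m), f (u / m) (u % m) = ∑ c ∈ range t, ∑ v ∈ range m, f c v := by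
  induction t with
  | zero => simp
  | succ t ih =>
    rw [sum_range_succ, ← ih, Nat.succ_mul, sum_range_add]
    congr 1
    refine sum_congr rfl fun v hv => ?_
    have hv : v < m := mem_range.mp hv
    rw [Nat.mul_add_mod_of_lt hv, Nat.add_comm, Nat.add_mul_div_right _ _ (by omega),
      Nat.div_eq_of_lt hv, zero_add]

theorem sum_range_ite_eq_mul {t b : ℕ} (S : Finset ℕ) (hS : S ⊆ Icc 1 t) {P : ℕ → Prop}
    [DecidablePred P] (hP : ∀ c, P c ↔ c + 1 ∈ S) {f : ℕ → ℕ}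
    (hf : ∀ c < t, c + 1 ∉ S → f c = b) :
    ∑ c ∈ range t, (if P c then 0 else f c) = (t - #S) * b := by
  have hshift : ∑ c ∈ range t, (if P c then 0 else f c) =
      ∑ i ∈ Icc 1 t, if i ∈ S then 0 else b := by
    rw [← Ico_add_one_right_eq_Icc, sum_Ico_eq_sum_range, Nat.add_sub_cancel]
    refine sum_congr rfl fun c hc => ?_
    have hc : c < t := mem_range.mp hc
    rw [add_comm 1 c]
    by_cases h : P c
    · rw [if_pos h, if_pos ((hP c).mp h)]
    · rw [if_neg h, if_neg (mt (hP c).mpr h), hf c hc (mt (hP c).mpr h)]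
  rw [hshift, sum_ite, sum_const_zero, zero_add, sum_const, smul_eq_mul, filter_not,
    filter_mem_eq_inter, inter_eq_right.mpr hS, card_sdiff_of_subset hS, Nat.card_Icc,
    Nat.add_sub_cancel]

theorem card_filter_range_mul_eq {t m b : ℕ} (S : Finset ℕ) (hS : S ⊆ Icc 1 t)
    {P : ℕ → Prop} [DecidablePred P] {Q : ℕ → ℕ → Prop} [∀ c, DecidablePred (Q c)]
    (hPQ : ∀ u < t * m, P u ↔ u / m + 1 ∉ S ∧ Q (u / m) (u % m))
    (hQ : ∀ c < t, c + 1 ∉ S → #{v ∈ range m | Q c v} = b) :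
    #{u ∈ range (t * m) | P u} = (t - #S) * b := by
  rw [filter_congr fun u hu => hPQ u (mem_range.mp hu), card_filter,
    sum_range_mul_div_mod t m fun c v => if c + 1 ∉ S ∧ Q c v then 1 else 0]
  refine (sum_congr rfl fun c _ => ?_).trans
    (sum_range_ite_eq_mul S hS (fun c => Iff.rfl) (f := fun c => #{v ∈ range m | Q c v}) hQ)
  by_cases h : c + 1 ∈ S
  · simp [h]
  · simp only [h, not_false_eq_true, true_and, if_false, card_filter]

theorem div_lt_and_mod_lt {t m u : ℕ} (hu : u < t * m) : u / m < t ∧ u % m < m :=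
  ⟨Nat.div_lt_of_lt_mul (by rwa [mul_comm] at hu),
    Nat.mod_lt u (Nat.pos_of_ne_zero (by rintro rfl; simp at hu))⟩

def replaceByControl (i : ℕ) (d : ℕ → ℕ → ℕ) : ℕ → ℕ → ℕ :=
  fun k u => if d k u = i then 0 else d k u

def juxtapose (m : ℕ) (D : ℕ → ℕ → ℕ → ℕ) : ℕ → ℕ → ℕ :=
  fun k u => D (u / m) k (u % m)

/-- The label, in `d`, of the entries that carry label `i` in `replaceByControl c d`. -/
def sourceLabel (c i : ℕ) : ℕ := if i = 0 then c else i

@[simp]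
theorem sourceLabel_zero (c : ℕ) : sourceLabel c 0 = c := rfl

theorem sourceLabel_of_mem_Icc {t c i : ℕ} (hi : i ∈ Icc 1 t) : sourceLabel c i = i :=
  if_neg (by simp at hi; omega)

theorem sourceLabel_mem_Icc {t c i : ℕ} (hc : c ∈ Icc 1 t) (hi : i ≤ t) :
    sourceLabel c i ∈ Icc 1 t := by
  unfold sourceLabel
  split_ifs <;> simp_all [mem_Icc]
  omega

theorem ite_eq_zero_eq_iff {c x i : ℕ} (hx : x ≠ 0) :
    (if x = c then 0 else x) = i ↔ c ≠ i ∧ x = sourceLabel c i := by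
  unfold sourceLabel
  split_ifs <;> omega

theorem card_filter_replace {α : Type*} (s : Finset α) {f : α → ℕ} {c : ℕ}
    (hf : ∀ a ∈ s, f a ≠ 0) (i : ℕ) :
    #{a ∈ s | (if f a = c then 0 else f a) = i} =
      if c = i then 0 else #{a ∈ s | f a = sourceLabel c i} := by
  rw [filter_congr fun a ha => ite_eq_zero_eq_iff (hf a ha)]
  split_ifs with h <;> simp [h]

theorem card_filter_replace_and {α : Type*} (s : Finset α) {f g : α → ℕ} {c : ℕ}
    (hf : ∀ a ∈ s, f a ≠ 0) (hg : ∀ a ∈ s, g a ≠ 0) (i j : ℕ) :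
    #{a ∈ s | (if f a = c then 0 else f a) = i ∧ (if g a = c then 0 else g a) = j} =
      if c = i ∨ c = j then 0
      else #{a ∈ s | f a = sourceLabel c i ∧ g a = sourceLabel c j} := by
  rw [filter_congr fun a ha => and_congr (ite_eq_zero_eq_iff (hf a ha))
    (ite_eq_zero_eq_iff (hg a ha))]
  split_ifs with h
  · rcases h with h | h <;> simp [h]
  · simp [not_or.mp h]

section replaceByControl

variable {d : ℕ → ℕ → ℕ} {c p n : ℕ}

theorem nC_replaceByControl {u : ℕ} (hd : ∀ k < p, d k u ≠ 0) (i : ℕ) :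
    nC (replaceByControl c d) p i u = if c = i then 0 else nC d p (sourceLabel c i) u :=
  card_filter_replace _ (fun k hk => hd k (mem_range.mp hk)) i

theorem nT_replaceByControl {u : ℕ} (hd : ∀ k < p, d k u ≠ 0) (i : ℕ) :
    nT (replaceByControl c d) p i u = if c = i then 0 else nT d p (sourceLabel c i) u :=
  card_filter_replace _ (fun k hk => hd k (by have := mem_range.mp hk; omega)) i

theorem lC_replaceByControl {k : ℕ} (hd : ∀ u < n, d k u ≠ 0) (i : ℕ) :
    lC (replaceByControl c d) n i k = if c = i then 0 else lC d n (sourceLabel c i) k :=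
  card_filter_replace _ (fun u hu => hd u (mem_range.mp hu)) i

theorem rC_replaceByControl (hd : ∀ k < p, ∀ u < n, d k u ≠ 0) (i : ℕ) :
    rC (replaceByControl c d) p n i = if c = i then 0 else rC d p n (sourceLabel c i) := by
  rw [rC, sum_congr rfl fun u hu => nC_replaceByControl (fun k hk => hd k hk u (mem_range.mp hu)) i]
  split_ifs <;> simp [rC]

theorem rT_replaceByControl (hd : ∀ k < p, ∀ u < n, d k u ≠ 0) (i : ℕ) :
    rT (replaceByControl c d) p n i = if c = i then 0 else rT d p n (sourceLabel c i) := by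
  rw [rT, sum_congr rfl fun u hu => nT_replaceByControl (fun k hk => hd k hk u (mem_range.mp hu)) i]
  split_ifs <;> simp [rT]

theorem mC_replaceByControl (hd : ∀ k < p, ∀ u < n, d k u ≠ 0) (i j : ℕ) :
    mC (replaceByControl c d) p n i j =
      if c = i ∨ c = j then 0 else mC d p n (sourceLabel c i) (sourceLabel c j) := by
  refine (sum_congr rfl fun u hu => card_filter_replace_and _ (f := fun k => d (k + 1) u)
    (g := fun k => d k u)
    (fun k hk => hd (k + 1) (by have := mem_range.mp hk; omega) u (mem_range.mp hu))
    (fun k hk => hd k (by have := mem_range.mp hk; omega) u (mem_range.mp hu)) i j).trans ?_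
  split_ifs <;> simp [mC]

end replaceByControl

section juxtapose

variable (t m p : ℕ) (D : ℕ → ℕ → ℕ → ℕ)

theorem rC_juxtapose (i : ℕ) :
    rC (juxtapose m D) p (t * m) i = ∑ c ∈ range t, rC (D c) p m i :=
  sum_range_mul_div_mod t m fun c v => nC (D c) p i v

theorem rT_juxtapose (i : ℕ) :
    rT (juxtapose m D) p (t * m) i = ∑ c ∈ range t, rT (D c) p m i :=
  sum_range_mul_div_mod t m fun c v => nT (D c) p i v

theorem mC_juxtapose (i j : ℕ) :
    mC (juxtapose m D) p (t * m) i j = ∑ c ∈ range t, mC (D c) p m i j :=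
  sum_range_mul_div_mod t m fun c v =>
    #{k ∈ range (p - 1) | D c (k + 1) v = i ∧ D c k v = j}

theorem lC_juxtapose (i k : ℕ) :
    lC (juxtapose m D) (t * m) i k = ∑ c ∈ range t, lC (D c) m i k := by
  simp only [lC, card_filter]
  exact sum_range_mul_div_mod t m fun c v => if D c k v = i then 1 else 0

end juxtapose

def juxtaposedReplacements (m : ℕ) (d₀ : ℕ → ℕ → ℕ) : ℕ → ℕ → ℕ :=
  juxtapose m fun c => replaceByControl (c + 1) d₀

theorem nC_eq_nT_add {d : ℕ → ℕ → ℕ} {p : ℕ} (hp : 0 < p) (i u : ℕ) :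
    nC d p i u = nT d p i u + if d (p - 1) u = i then 1 else 0 := by
  obtain ⟨p, rfl⟩ := Nat.exists_eq_add_one_of_ne_zero hp.ne'
  rw [nC, nT, Nat.add_sub_cancel, range_add_one, filter_insert]
  split_ifs
  · exact card_insert_of_notMem (by simp)
  · rfl

structure IsBalancedUniform (t m lam : ℕ) (d : ℕ → ℕ → ℕ) : Prop where
  label_mem : ∀ k < t, ∀ u < m, 1 ≤ d k u ∧ d k u ≤ t
  nC_eq_one : ∀ i ∈ Icc 1 t, ∀ u < m, nC d t i u = 1
  mul_lC_eq : ∀ i ∈ Icc 1 t, ∀ k < t, t * lC d m i k = m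
  mC_eq : ∀ i ∈ Icc 1 t, ∀ j ∈ Icc 1 t, i ≠ j → mC d t m i j = lam
  mC_self : ∀ i ∈ Icc 1 t, mC d t m i i = 0

namespace IsBalancedUniform

variable {t m lam : ℕ} {d₀ : ℕ → ℕ → ℕ}

theorem ne_zero (h : IsBalancedUniform t m lam d₀) {k u : ℕ} (hk : k < t) (hu : u < m) :
    d₀ k u ≠ 0 :=
  Nat.one_le_iff_ne_zero.mp (h.label_mem k hk u hu).1

theorem lC_eq (h : IsBalancedUniform t m lam d₀) {i k : ℕ} (hi : i ∈ Icc 1 t) (hk : k < t) :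
    lC d₀ m i k = m / t :=
  Nat.eq_div_of_mul_eq_right (by omega) (h.mul_lC_eq i hi k hk)

theorem mul_div_eq (h : IsBalancedUniform t m lam d₀) (ht : 0 < t) : t * (m / t) = m := by
  rw [← h.lC_eq (k := 0) (mem_Icc.mpr ⟨le_rfl, ht⟩) ht]
  exact h.mul_lC_eq 1 (mem_Icc.mpr ⟨le_rfl, ht⟩) 0 ht

theorem rC_eq (h : IsBalancedUniform t m lam d₀) {i : ℕ} (hi : i ∈ Icc 1 t) :
    rC d₀ t m i = m := by
  rw [rC, sum_congr rfl fun u hu => h.nC_eq_one i hi u (mem_range.mp hu)]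
  simp

theorem nT_eq (h : IsBalancedUniform t m lam d₀) {i u : ℕ} (hi : i ∈ Icc 1 t) (hu : u < m) :
    nT d₀ t i u = if d₀ (t - 1) u = i then 0 else 1 := by
  have hsplit := nC_eq_nT_add (d := d₀) (by simp at hi; omega : 0 < t) i u
  rw [h.nC_eq_one i hi u hu] at hsplit
  split_ifs at hsplit ⊢ <;> omega

theorem card_filter_last_ne (h : IsBalancedUniform t m lam d₀) {i : ℕ} (hi : i ∈ Icc 1 t) :
    #{u ∈ range m | d₀ (t - 1) u ≠ i} = m - m / t := by
  rw [filter_not, card_sdiff_of_subset (filter_subset _ _), card_range,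
    ← h.lC_eq (k := t - 1) hi (by simp at hi; omega), lC]

theorem card_filter_last_ne_ne (h : IsBalancedUniform t m lam d₀) {i j : ℕ} (hi : i ∈ Icc 1 t)
    (hj : j ∈ Icc 1 t) (hij : i ≠ j) :
    #{u ∈ range m | d₀ (t - 1) u ≠ i ∧ d₀ (t - 1) u ≠ j} = m - 2 * (m / t) := by
  have hdisj : Disjoint {u ∈ range m | d₀ (t - 1) u = i} {u ∈ range m | d₀ (t - 1) u = j} :=
    disjoint_filter.mpr fun _ _ hi hj => hij (hi.symm.trans hj)
  simp_rw [← not_or]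
  rw [filter_not, card_sdiff_of_subset (filter_subset _ _), card_range, filter_or,
    card_union_of_disjoint hdisj, ← lC, ← lC, h.lC_eq hi (by simp at hi; omega),
    h.lC_eq hj (by simp at hi; omega), two_mul]

theorem rT_eq (h : IsBalancedUniform t m lam d₀) {i : ℕ} (hi : i ∈ Icc 1 t) :
    rT d₀ t m i = m - m / t := by
  rw [rT, sum_congr rfl fun u hu => h.nT_eq hi (mem_range.mp hu), ← h.card_filter_last_ne hi,
    card_filter]
  exact sum_congr rfl fun u _ => by split_ifs <;> simp_all

theorem nC_juxtaposedReplacements (h : IsBalancedUniform t m lam d₀) {i u : ℕ} (hi : i ≤ t)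
    (hu : u < t * m) :
    nC (juxtaposedReplacements m d₀) t i u = if u / m + 1 = i then 0 else 1 := by
  obtain ⟨hc, hv⟩ := div_lt_and_mod_lt hu
  change nC (replaceByControl (u / m + 1) d₀) t i (u % m) = _
  rw [nC_replaceByControl (fun k hk => h.ne_zero hk hv),
    h.nC_eq_one _ (sourceLabel_mem_Icc (by simp; omega) hi) _ hv]

theorem nT_juxtaposedReplacements (h : IsBalancedUniform t m lam d₀) {i u : ℕ} (hi : i ≤ t)
    (hu : u < t * m) :
    nT (juxtaposedReplacements m d₀) t i u =
      if u / m + 1 = i ∨ d₀ (t - 1) (u % m) = sourceLabel (u / m + 1) i then 0 else 1 := by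
  obtain ⟨hc, hv⟩ := div_lt_and_mod_lt hu
  change nT (replaceByControl (u / m + 1) d₀) t i (u % m) = _
  rw [nT_replaceByControl (fun k hk => h.ne_zero hk hv),
    h.nT_eq (sourceLabel_mem_Icc (by simp; omega) hi) hv]
  split_ifs <;> simp_all

theorem nC_juxtaposedReplacements_control (h : IsBalancedUniform t m lam d₀) {u : ℕ}
    (hu : u < t * m) : nC (juxtaposedReplacements m d₀) t 0 u = 1 := by
  simpa using h.nC_juxtaposedReplacements (Nat.zero_le t) hu

theorem nC_juxtaposedReplacements_le_one (h : IsBalancedUniform t m lam d₀) {i u : ℕ}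
    (hi : i ≤ t) (hu : u < t * m) : nC (juxtaposedReplacements m d₀) t i u ≤ 1 := by
  rw [h.nC_juxtaposedReplacements hi hu]
  split_ifs <;> omega

theorem nT_juxtaposedReplacements_le_one (h : IsBalancedUniform t m lam d₀) {i u : ℕ}
    (hi : i ≤ t) (hu : u < t * m) : nT (juxtaposedReplacements m d₀) t i u ≤ 1 := by
  rw [h.nT_juxtaposedReplacements hi hu]
  split_ifs <;> omega

theorem rC_juxtaposedReplacements_eq_sum (h : IsBalancedUniform t m lam d₀) {i : ℕ}
    (hi : i ≤ t) :
    rC (juxtaposedReplacements m d₀) t (t * m) i =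
      ∑ c ∈ range t, if c + 1 = i then 0 else m := by
  rw [juxtaposedReplacements, rC_juxtapose]
  refine sum_congr rfl fun c hc => ?_
  rw [rC_replaceByControl (fun k hk u hu => h.ne_zero hk hu),
    h.rC_eq (sourceLabel_mem_Icc (by simp at hc ⊢; omega) hi)]

theorem rT_juxtaposedReplacements_eq_sum (h : IsBalancedUniform t m lam d₀) {i : ℕ}
    (hi : i ≤ t) :
    rT (juxtaposedReplacements m d₀) t (t * m) i =
      ∑ c ∈ range t, if c + 1 = i then 0 else m - m / t := by
  rw [juxtaposedReplacements, rT_juxtapose]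
  refine sum_congr rfl fun c hc => ?_
  rw [rT_replaceByControl (fun k hk u hu => h.ne_zero hk hu),
    h.rT_eq (sourceLabel_mem_Icc (by simp at hc ⊢; omega) hi)]

theorem lC_juxtaposedReplacements_eq_sum (h : IsBalancedUniform t m lam d₀) {i k : ℕ}
    (hi : i ≤ t) (hk : k < t) :
    lC (juxtaposedReplacements m d₀) (t * m) i k =
      ∑ c ∈ range t, if c + 1 = i then 0 else m / t := by
  rw [juxtaposedReplacements, lC_juxtapose]
  refine sum_congr rfl fun c hc => ?_
  rw [lC_replaceByControl (fun u hu => h.ne_zero hk hu),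
    h.lC_eq (sourceLabel_mem_Icc (by simp at hc ⊢; omega) hi) hk]

theorem mC_juxtaposedReplacements_eq_sum (h : IsBalancedUniform t m lam d₀) (i j : ℕ) :
    mC (juxtaposedReplacements m d₀) t (t * m) i j =
      ∑ c ∈ range t, if c + 1 = i ∨ c + 1 = j then 0 else
        mC d₀ t m (sourceLabel (c + 1) i) (sourceLabel (c + 1) j) := by
  rw [juxtaposedReplacements, mC_juxtapose]
  exact sum_congr rfl fun c _ => mC_replaceByControl (fun k hk u hu => h.ne_zero hk hu) i j

theorem rC_juxtaposedReplacements_test (h : IsBalancedUniform t m lam d₀) {i : ℕ}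
    (hi : i ∈ Icc 1 t) :
    rC (juxtaposedReplacements m d₀) t (t * m) i = (t - 1) * m := by
  rw [h.rC_juxtaposedReplacements_eq_sum (mem_Icc.mp hi).2]
  exact (sum_range_ite_eq_mul {i} (singleton_subset_iff.mpr hi) (by simp) fun _ _ _ => rfl).trans
    (by rw [card_singleton])

theorem rC_juxtaposedReplacements_control (h : IsBalancedUniform t m lam d₀) :
    rC (juxtaposedReplacements m d₀) t (t * m) 0 = t * m := by
  simp [h.rC_juxtaposedReplacements_eq_sum (Nat.zero_le t)]

theorem rC_juxtaposedReplacements_control_div (h : IsBalancedUniform t m lam d₀) (ht : 0 < t)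
    (hm : 0 < m) : rC (juxtaposedReplacements m d₀) t (t * m) 0 / (t * m) = 1 := by
  rw [h.rC_juxtaposedReplacements_control, Nat.div_self (by positivity)]

theorem rT_juxtaposedReplacements_test (h : IsBalancedUniform t m lam d₀) {i : ℕ}
    (hi : i ∈ Icc 1 t) :
    rT (juxtaposedReplacements m d₀) t (t * m) i = (t - 1) * (m - m / t) := by
  rw [h.rT_juxtaposedReplacements_eq_sum (mem_Icc.mp hi).2]
  exact (sum_range_ite_eq_mul {i} (singleton_subset_iff.mpr hi) (by simp) fun _ _ _ => rfl).trans
    (by rw [card_singleton])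

theorem rT_juxtaposedReplacements_control (h : IsBalancedUniform t m lam d₀) :
    rT (juxtaposedReplacements m d₀) t (t * m) 0 = t * (m - m / t) := by
  simp [h.rT_juxtaposedReplacements_eq_sum (Nat.zero_le t)]

theorem rT_juxtaposedReplacements_control_div (h : IsBalancedUniform t m lam d₀) (ht : 0 < t)
    (hm : 0 < m) : rT (juxtaposedReplacements m d₀) t (t * m) 0 / (t * m) = 0 := by
  have hq : 0 < m / t := Nat.pos_of_ne_zero fun h0 => by
    have := h.mul_div_eq ht
    simp [h0] at this
    omega
  rw [h.rT_juxtaposedReplacements_control]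
  exact Nat.div_eq_of_lt (Nat.mul_lt_mul_of_pos_left (by omega) ht)

theorem lC_juxtaposedReplacements_test (h : IsBalancedUniform t m lam d₀) {i k : ℕ}
    (hi : i ∈ Icc 1 t) (hk : k < t) :
    lC (juxtaposedReplacements m d₀) (t * m) i k = (t - 1) * (m / t) := by
  rw [h.lC_juxtaposedReplacements_eq_sum (mem_Icc.mp hi).2 hk]
  exact (sum_range_ite_eq_mul {i} (singleton_subset_iff.mpr hi) (by simp) fun _ _ _ => rfl).trans
    (by rw [card_singleton])

theorem lC_juxtaposedReplacements_control (h : IsBalancedUniform t m lam d₀) {k : ℕ}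
    (hk : k < t) :
    lC (juxtaposedReplacements m d₀) (t * m) 0 k = t * (m / t) := by
  simp [h.lC_juxtaposedReplacements_eq_sum (Nat.zero_le t) hk]

theorem mul_mul_lC_juxtaposedReplacements_test (h : IsBalancedUniform t m lam d₀) {i k : ℕ}
    (hi : i ∈ Icc 1 t) (hk : k < t) :
    t * t * lC (juxtaposedReplacements m d₀) (t * m) i k = t * m * t - t * m := by
  rw [h.lC_juxtaposedReplacements_test hi hk,
    show t * t * ((t - 1) * (m / t)) = t * (t - 1) * (t * (m / t)) by ring,
    h.mul_div_eq (by simp at hi; omega), Nat.mul_sub_one, Nat.sub_mul, mul_right_comm]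

theorem mC_juxtaposedReplacements_test_test (h : IsBalancedUniform t m lam d₀) {i j : ℕ}
    (hi : i ∈ Icc 1 t) (hj : j ∈ Icc 1 t) (hij : i ≠ j) :
    mC (juxtaposedReplacements m d₀) t (t * m) i j = (t - 2) * lam := by
  rw [h.mC_juxtaposedReplacements_eq_sum]
  refine (sum_range_ite_eq_mul {i, j} (by simp [insert_subset_iff, hi, hj]) (by simp) ?_).trans
    (by rw [card_pair hij])
  intro c _ _
  rw [sourceLabel_of_mem_Icc hi, sourceLabel_of_mem_Icc hj]
  exact h.mC_eq i hi j hj hij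

theorem mC_juxtaposedReplacements_control_test (h : IsBalancedUniform t m lam d₀) {j : ℕ}
    (hj : j ∈ Icc 1 t) :
    mC (juxtaposedReplacements m d₀) t (t * m) 0 j = (t - 1) * lam := by
  rw [h.mC_juxtaposedReplacements_eq_sum]
  refine (sum_range_ite_eq_mul {j} (singleton_subset_iff.mpr hj) (by simp) ?_).trans
    (by rw [card_singleton])
  intro c hc hcj
  rw [sourceLabel_zero, sourceLabel_of_mem_Icc hj]
  exact h.mC_eq _ (mem_Icc.mpr ⟨by omega, by omega⟩) j hj (by simpa using hcj)

theorem mC_juxtaposedReplacements_test_control (h : IsBalancedUniform t m lam d₀) {i : ℕ}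
    (hi : i ∈ Icc 1 t) :
    mC (juxtaposedReplacements m d₀) t (t * m) i 0 = (t - 1) * lam := by
  rw [h.mC_juxtaposedReplacements_eq_sum]
  refine (sum_range_ite_eq_mul {i} (singleton_subset_iff.mpr hi) (by simp) ?_).trans
    (by rw [card_singleton])
  intro c hc hci
  rw [sourceLabel_zero, sourceLabel_of_mem_Icc hi]
  exact h.mC_eq i hi _ (mem_Icc.mpr ⟨by omega, by omega⟩) (by simpa [eq_comm] using hci)

theorem mC_juxtaposedReplacements_self (h : IsBalancedUniform t m lam d₀) {i : ℕ}
    (hi : i ≤ t) :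
    mC (juxtaposedReplacements m d₀) t (t * m) i i = 0 := by
  rw [h.mC_juxtaposedReplacements_eq_sum]
  refine sum_eq_zero fun c hc => ?_
  split_ifs
  · rfl
  · exact h.mC_self _ (sourceLabel_mem_Icc (by simp at hc ⊢; omega) hi)

theorem card_filter_nC_pair (h : IsBalancedUniform t m lam d₀) {i j : ℕ} (hi : i ∈ Icc 1 t)
    (hj : j ∈ Icc 1 t) (hij : i ≠ j) :
    #{u ∈ range (t * m) | 1 ≤ nC (juxtaposedReplacements m d₀) t i u ∧
      1 ≤ nC (juxtaposedReplacements m d₀) t j u} = (t - 2) * m := by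
  refine (card_filter_range_mul_eq {i, j} (by simp [insert_subset_iff, hi, hj])
    (Q := fun _ _ => True) (b := m) (fun u hu => ?_) fun _ _ _ => by simp).trans
    (by rw [card_pair hij])
  rw [h.nC_juxtaposedReplacements (mem_Icc.mp hi).2 hu,
    h.nC_juxtaposedReplacements (mem_Icc.mp hj).2 hu]
  split_ifs <;> simp_all

theorem card_filter_nC_control_test (h : IsBalancedUniform t m lam d₀) {i : ℕ}
    (hi : i ∈ Icc 1 t) :
    #{u ∈ range (t * m) | nC (juxtaposedReplacements m d₀) t 0 u = 1 ∧
      1 ≤ nC (juxtaposedReplacements m d₀) t i u} = (t - 1) * m := by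
  refine (card_filter_range_mul_eq {i} (singleton_subset_iff.mpr hi)
    (Q := fun _ _ => True) (b := m) (fun u hu => ?_) fun _ _ _ => by simp).trans
    (by rw [card_singleton])
  rw [h.nC_juxtaposedReplacements (Nat.zero_le t) hu,
    h.nC_juxtaposedReplacements (mem_Icc.mp hi).2 hu]
  split_ifs <;> simp_all

theorem card_filter_nT_pair (h : IsBalancedUniform t m lam d₀) {i j : ℕ} (hi : i ∈ Icc 1 t)
    (hj : j ∈ Icc 1 t) (hij : i ≠ j) :
    #{u ∈ range (t * m) | 1 ≤ nT (juxtaposedReplacements m d₀) t i u ∧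
      1 ≤ nT (juxtaposedReplacements m d₀) t j u} = (t - 2) * (m - 2 * (m / t)) := by
  refine (card_filter_range_mul_eq {i, j} (by simp [insert_subset_iff, hi, hj])
    (Q := fun _ v => d₀ (t - 1) v ≠ i ∧ d₀ (t - 1) v ≠ j) (fun u hu => ?_)
    fun _ _ _ => h.card_filter_last_ne_ne hi hj hij).trans (by rw [card_pair hij])
  rw [h.nT_juxtaposedReplacements (mem_Icc.mp hi).2 hu,
    h.nT_juxtaposedReplacements (mem_Icc.mp hj).2 hu, sourceLabel_of_mem_Icc hi,
    sourceLabel_of_mem_Icc hj]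
  split_ifs <;> simp_all <;> tauto

theorem card_filter_nT_control_test (h : IsBalancedUniform t m lam d₀) {i : ℕ}
    (hi : i ∈ Icc 1 t) :
    #{u ∈ range (t * m) | nT (juxtaposedReplacements m d₀) t 0 u = 0 ∧
      1 ≤ nT (juxtaposedReplacements m d₀) t i u} = (t - 1) * (m / t) := by
  refine (card_filter_range_mul_eq {i} (singleton_subset_iff.mpr hi)
    (Q := fun c v => d₀ (t - 1) v = c + 1) (fun u hu => ?_)
    fun c hc _ => h.lC_eq (mem_Icc.mpr ⟨by omega, by omega⟩) (by omega)).trans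
    (by rw [card_singleton])
  rw [h.nT_juxtaposedReplacements (Nat.zero_le t) hu,
    h.nT_juxtaposedReplacements (mem_Icc.mp hi).2 hu, sourceLabel_zero,
    sourceLabel_of_mem_Icc hi]
  split_ifs <;> simp_all

theorem card_filter_nT_nC (h : IsBalancedUniform t m lam d₀) {i j : ℕ} (hi : i ∈ Icc 1 t)
    (hj : j ∈ Icc 1 t) (hij : i ≠ j) :
    #{u ∈ range (t * m) | nT (juxtaposedReplacements m d₀) t j u = 1 ∧
      nC (juxtaposedReplacements m d₀) t i u = 1} = (t - 2) * (m - m / t) := by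
  refine (card_filter_range_mul_eq {i, j} (by simp [insert_subset_iff, hi, hj])
    (Q := fun _ v => d₀ (t - 1) v ≠ j) (fun u hu => ?_)
    fun _ _ _ => h.card_filter_last_ne hj).trans (by rw [card_pair hij])
  rw [h.nT_juxtaposedReplacements (mem_Icc.mp hj).2 hu,
    h.nC_juxtaposedReplacements (mem_Icc.mp hi).2 hu, sourceLabel_of_mem_Icc hj]
  split_ifs <;> simp_all
  tauto

theorem card_filter_nT_control_nC (h : IsBalancedUniform t m lam d₀) {i : ℕ}
    (hi : i ∈ Icc 1 t) :
    #{u ∈ range (t * m) | nT (juxtaposedReplacements m d₀) t 0 u = 0 ∧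
      nC (juxtaposedReplacements m d₀) t i u = 1} = (t - 1) * (m / t) := by
  refine (card_filter_range_mul_eq {i} (singleton_subset_iff.mpr hi)
    (Q := fun c v => d₀ (t - 1) v = c + 1) (fun u hu => ?_)
    fun c hc _ => h.lC_eq (mem_Icc.mpr ⟨by omega, by omega⟩) (by omega)).trans
    (by rw [card_singleton])
  rw [h.nT_juxtaposedReplacements (Nat.zero_le t) hu,
    h.nC_juxtaposedReplacements (mem_Icc.mp hi).2 hu, sourceLabel_zero]
  split_ifs <;> simp_all

theorem card_filter_nT_nC_control (h : IsBalancedUniform t m lam d₀) {i : ℕ}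
    (hi : i ∈ Icc 1 t) :
    #{u ∈ range (t * m) | nT (juxtaposedReplacements m d₀) t i u = 1 ∧
      nC (juxtaposedReplacements m d₀) t 0 u = 1} = (t - 1) * (m - m / t) := by
  refine (card_filter_range_mul_eq {i} (singleton_subset_iff.mpr hi)
    (Q := fun _ v => d₀ (t - 1) v ≠ i) (fun u hu => ?_)
    fun _ _ _ => h.card_filter_last_ne hi).trans (by rw [card_singleton])
  rw [h.nT_juxtaposedReplacements (mem_Icc.mp hi).2 hu,
    h.nC_juxtaposedReplacements (Nat.zero_le t) hu, sourceLabel_of_mem_Icc hi]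
  split_ifs <;> simp_all
  tauto

theorem isTotallyBalanced_juxtaposedReplacements (h : IsBalancedUniform t m lam d₀)
    (ht : 0 < t) (hm : 0 < m) :
    IsTotallyBalanced t (t * m) t (juxtaposedReplacements m d₀) := by
  have hrC := h.rC_juxtaposedReplacements_control_div ht hm
  have hrT := h.rT_juxtaposedReplacements_control_div ht hm
  refine ⟨fun i hi j hj => by rw [h.rC_juxtaposedReplacements_test hi,
      h.rC_juxtaposedReplacements_test hj],
    fun i hi u hu => h.nC_juxtaposedReplacements_le_one (mem_Icc.mp hi).2 hu,
    fun i hi j hj i' hi' j' hj' hij hij' => by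
      rw [h.card_filter_nC_pair hi hj hij, h.card_filter_nC_pair hi' hj' hij'],
    fun u hu => Or.inl (by rw [hrC, h.nC_juxtaposedReplacements_control hu]),
    fun i hi j hj => by
      rw [hrC, h.card_filter_nC_control_test hi, h.card_filter_nC_control_test hj],
    fun i hi j hj => by rw [h.rT_juxtaposedReplacements_test hi,
      h.rT_juxtaposedReplacements_test hj],
    fun i hi u hu => h.nT_juxtaposedReplacements_le_one (mem_Icc.mp hi).2 hu,
    fun i hi j hj i' hi' j' hj' hij hij' => by
      rw [h.card_filter_nT_pair hi hj hij, h.card_filter_nT_pair hi' hj' hij'],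
    fun u hu => by
      rw [hrT]
      have := h.nT_juxtaposedReplacements_le_one (Nat.zero_le t) hu
      omega,
    fun i hi j hj => by
      rw [hrT, h.card_filter_nT_control_test hi, h.card_filter_nT_control_test hj],
    fun i hi j hj i' hi' j' hj' hij hij' => by
      rw [h.mC_juxtaposedReplacements_test_test hi hj hij,
        h.mC_juxtaposedReplacements_test_test hi' hj' hij'],
    fun i hi j hj => by rw [h.mC_juxtaposedReplacements_control_test hi,
      h.mC_juxtaposedReplacements_control_test hj],
    fun i hi j hj => by rw [h.mC_juxtaposedReplacements_test_control hi,
      h.mC_juxtaposedReplacements_test_control hj],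
    fun i hi => h.mC_juxtaposedReplacements_self hi,
    fun i hi k hk => by
      rw [h.rC_juxtaposedReplacements_control, h.mul_mul_lC_juxtaposedReplacements_test hi hk],
    fun k hk => by rw [h.lC_juxtaposedReplacements_control hk,
      h.rC_juxtaposedReplacements_control, h.mul_div_eq ht],
    fun i hi j hj i' hi' j' hj' hij hij' => by
      rw [h.card_filter_nT_nC hi hj hij, h.card_filter_nT_nC hi' hj' hij'],
    fun i hi j hj => by
      rw [hrT, h.card_filter_nT_control_nC hi, h.card_filter_nT_control_nC hj],
    fun i hi j hj => by
      rw [hrC, h.card_filter_nT_nC_control hi, h.card_filter_nT_nC_control hj]⟩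

end IsBalancedUniform

/-- Let `d₀` be a balanced uniform design with `t` treatments labeled `1,…,t`, `m` units
and `t` periods.  Replacing, for each `i = 1,…,t`, every occurrence of treatment `i` by the
control label `0` and juxtaposing the `t` resulting designs (unit `u < t*m` belongs to the
copy in which treatment `u / m + 1` has been replaced) yields a totally balanced
test-control incomplete crossover design on `n = t*m` units with `r_{d0} = t*m`. -/
theorem stmt3 (t m : ℕ) (ht : 3 ≤ t) (hm : 1 ≤ m)
    (d₀ : ℕ → ℕ → ℕ) (hd₀ : ∀ k < t, ∀ u < m, 1 ≤ d₀ k u ∧ d₀ k u ≤ t)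
    (hunit : ∀ i ∈ Finset.Icc 1 t, ∀ u < m, nC d₀ t i u = 1)
    (hper : ∀ i ∈ Finset.Icc 1 t, ∀ k < t, t * lC d₀ m i k = m)
    (hcarry : ∃ lam, ∀ i ∈ Finset.Icc 1 t, ∀ j ∈ Finset.Icc 1 t, i ≠ j →
      mC d₀ t m i j = lam)
    (hself : ∀ i ∈ Finset.Icc 1 t, mC d₀ t m i i = 0) :
    IsTotallyBalanced t (t * m) t
        (fun k u => if d₀ k (u % m) = u / m + 1 then 0 else d₀ k (u % m)) ∧
      rC (fun k u => if d₀ k (u % m) = u / m + 1 then 0 else d₀ k (u % m)) t (t * m) 0 =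
        t * m := by
  obtain ⟨lam, hlam⟩ := hcarry
  have h : IsBalancedUniform t m lam d₀ := ⟨hd₀, hunit, hper, hlam, hself⟩
  exact ⟨h.isTotallyBalanced_juxtaposedReplacements (by omega) hm,
    h.rC_juxtaposedReplacements_control⟩
end

section
/- (Proposition A.3) Under the standing hypotheses (H), one has Δ̃₁ ≥ (t−1)·Δ̃₂. -/
set_option linter.unusedVariables false

/-- The quantity `Δ̃₁` from Hedayat–Yang (2005). -/
noncomputable def Delta1 (n p t r0 rt0 x1 x2 x3 : ℝ) : ℝ :=
  t * (p - 1) * (n * p - r0) - p * (r0 - x1 / p) -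
    (n * t * (p - 1) - t * rt0 - x2) ^ 2 /
      (n * (p - 1) * (p * t - t - 1) - (p * t - t + p - 2) * rt0 + x3)

/-- The quantity `Δ̃₂` from Hedayat–Yang (2005). -/
noncomputable def Delta2 (n p t r0 rt0 x1 x2 x3 : ℝ) : ℝ :=
  p * (r0 - x1 / p) -
    n * (p - 1) * x2 ^ 2 / (n * p * (p - 1) * rt0 - rt0 ^ 2 - n * (p - 1) * x3)

/-- The quantity `Θ̃₁` from Hedayat–Yang (2005). -/
noncomputable def Theta1 (n p t r0 rt0 x1 x2 x3 : ℝ) : ℝ :=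
  (n * t * (p - 1) - t * rt0 - x2) /
    (n * (p - 1) * (p * t - t - 1) - (p * t - t + p - 2) * rt0 + x3)

/-- The quantity `Θ̃₂` from Hedayat–Yang (2005). -/
noncomputable def Theta2 (n p t r0 rt0 x1 x2 x3 : ℝ) : ℝ :=
  n * (p - 1) * x2 / (n * p * (p - 1) * rt0 - rt0 ^ 2 - n * (p - 1) * x3)

/-!
Write `s = n(p - 1)`, so that `(p - 1) r₀ = p r̃₀`. In `Δ̃₁ - (t - 1) Δ̃₂` the `ξ₁`-terms add up to
`-t (p r₀ - ξ₁) ≥ -t p r̃₀`, and both fractions move in the unfavourable direction as `ξ₂` and `ξ₃`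
decrease, so it suffices to treat the extremal case `ξ₂ = ξ₃ = r̃₀`. There, clearing the
denominators leaves a polynomial whose coefficients, written in the variables `p - 3`, `t - 2`,
`s - 2 r̃₀` and `r̃₀`, are all nonnegative.
-/

section

variable {p t s r x2 x3 : ℝ}

theorem extremal_cross_multiplied_nonneg (hp : 3 ≤ p) (ht : 2 ≤ t) (hr : 0 ≤ r)
    (hrs : 2 * r ≤ s) :
    0 ≤ t * p * (s - 2 * r) * (s * (p * t - t - 1) - (p * t - t + p - 2) * r + r) *
          (p * s * r - r ^ 2 - s * r)
        - (t * s - t * r - r) ^ 2 * (p * s * r - r ^ 2 - s * r)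
        + (t - 1) * (s * r ^ 2) * (s * (p * t - t - 1) - (p * t - t + p - 2) * r + r) := by
  obtain ⟨a, ha, rfl⟩ : ∃ a, 0 ≤ a ∧ p = 3 + a := ⟨p - 3, by linarith, by ring⟩
  obtain ⟨b, hb, rfl⟩ : ∃ b, 0 ≤ b ∧ t = 2 + b := ⟨t - 2, by linarith, by ring⟩
  obtain ⟨u, hu, rfl⟩ : ∃ u, 0 ≤ u ∧ s = 2 * r + u := ⟨s - 2 * r, by linarith, by ring⟩
  ring_nf
  positivity

theorem first_denominator_extremal_pos (hp : 3 ≤ p) (ht : 2 ≤ t) (hr : 0 < r)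
    (hrs : 2 * r ≤ s) :
    0 < s * (p * t - t - 1) - (p * t - t + p - 2) * r + r := by
  have hpt : 0 ≤ p * t - t - 1 := by nlinarith
  have hpos : 0 < (p - 1) * (t - 1) * r := by
    have : 0 < p - 1 := by linarith
    have : 0 < t - 1 := by linarith
    positivity
  linear_combination hpos + mul_nonneg hpt (sub_nonneg.2 hrs)

theorem extremal_fraction_gap_le (hp : 3 ≤ p) (ht : 2 ≤ t) (hr : 0 < r) (hrs : 2 * r ≤ s) :
    (t * s - t * r - r) ^ 2 / (s * (p * t - t - 1) - (p * t - t + p - 2) * r + r) ≤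
      t * p * (s - 2 * r) + (t - 1) * (s * r ^ 2 / (p * s * r - r ^ 2 - s * r)) := by
  have hD1 := first_denominator_extremal_pos hp ht hr hrs
  have hD2 : 0 < p * s * r - r ^ 2 - s * r := by
    have : 0 < (p - 1) * s - r := by nlinarith
    linear_combination r * this
  have hX : s * r ^ 2 / (p * s * r - r ^ 2 - s * r) * (p * s * r - r ^ 2 - s * r) = s * r ^ 2 :=
    div_mul_cancel₀ _ hD2.ne'
  rw [div_le_iff₀ hD1]
  refine le_of_mul_le_mul_right ?_ hD2
  linear_combination extremal_cross_multiplied_nonneg hp ht hr.le hrs -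
    (t - 1) * (s * (p * t - t - 1) - (p * t - t + p - 2) * r + r) * hX

theorem first_fraction_le_extremal (hp : 3 ≤ p) (ht : 2 ≤ t) (hr : 0 < r) (hrs : 2 * r ≤ s)
    (hx2l : r ≤ x2) (hx2u : x2 ≤ t * s - t * r) (hx3 : r ≤ x3) :
    (t * s - t * r - x2) ^ 2 / (s * (p * t - t - 1) - (p * t - t + p - 2) * r + x3) ≤
      (t * s - t * r - r) ^ 2 / (s * (p * t - t - 1) - (p * t - t + p - 2) * r + r) :=
  div_le_div₀ (sq_nonneg _) (pow_le_pow_left₀ (by linarith) (by linarith) 2)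
    (first_denominator_extremal_pos hp ht hr hrs) (by linarith)

theorem second_fraction_extremal_le (hr : 0 < r) (hrs : 2 * r ≤ s) (hx2 : r ≤ x2)
    (hx3 : r ≤ x3) (hD2 : 0 < p * s * r - r ^ 2 - s * x3) :
    s * r ^ 2 / (p * s * r - r ^ 2 - s * r) ≤ s * x2 ^ 2 / (p * s * r - r ^ 2 - s * x3) := by
  have hs : 0 ≤ s := by linarith
  exact div_le_div₀ (by positivity)
    (mul_le_mul_of_nonneg_left (pow_le_pow_left₀ hr.le hx2 2) hs) hD2
    (by linarith [mul_le_mul_of_nonneg_left hx3 hs])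

theorem fraction_gap_le (hp : 3 ≤ p) (ht : 2 ≤ t) (hr : 0 < r) (hrs : 2 * r ≤ s)
    (hx2l : r ≤ x2) (hx2u : x2 ≤ t * s - t * r) (hx3 : r ≤ x3)
    (hD2 : 0 < p * s * r - r ^ 2 - s * x3) :
    (t * s - t * r - x2) ^ 2 / (s * (p * t - t - 1) - (p * t - t + p - 2) * r + x3) -
      (t - 1) * (s * x2 ^ 2 / (p * s * r - r ^ 2 - s * x3)) ≤ t * p * (s - 2 * r) := by
  have h2 := mul_le_mul_of_nonneg_left (second_fraction_extremal_le hr hrs hx2l hx3 hD2)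
    (by linarith : 0 ≤ t - 1)
  linarith [first_fraction_le_extremal hp ht hr hrs hx2l hx2u hx3,
    extremal_fraction_gap_le hp ht hr hrs]

end

theorem stmt7_general (t p n : ℤ) (r0 rt0 x1 x2 x3 : ℝ)
    (ht : 2 ≤ t) (hp : 3 ≤ p)
    (hrt0 : 0 < rt0) (hrt0' : rt0 ≤ (n : ℝ) * ((p : ℝ) - 1) / 2)
    (hr0 : r0 = (p : ℝ) * rt0 / ((p : ℝ) - 1))
    (hx1 : r0 ≤ x1)
    (hx2l : rt0 ≤ x2) (hx2u : x2 ≤ (n : ℝ) * (t : ℝ) * ((p : ℝ) - 1) - (t : ℝ) * rt0)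
    (hx3 : rt0 ≤ x3)
    (hden2 : 0 < (n : ℝ) * p * ((p : ℝ) - 1) * rt0 - rt0 ^ 2 - (n : ℝ) * ((p : ℝ) - 1) * x3) :
    ((t : ℝ) - 1) * Delta2 n p t r0 rt0 x1 x2 x3 ≤ Delta1 n p t r0 rt0 x1 x2 x3 := by
  have hpR : (3 : ℝ) ≤ p := by exact_mod_cast hp
  have htR : (2 : ℝ) ≤ t := by exact_mod_cast ht
  have hr0p : ((p : ℝ) - 1) * r0 = p * rt0 := by
    have : (p : ℝ) - 1 ≠ 0 := by linarith
    rw [hr0]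
    field_simp
  have hx1p : (t : ℝ) * (p * (r0 - x1 / p)) ≤ t * (p * rt0) := by
    refine mul_le_mul_of_nonneg_left ?_ (by linarith)
    rw [mul_sub, mul_div_cancel₀ _ (by linarith)]
    linarith
  have hgap := fraction_gap_le (s := n * (p - 1)) hpR htR hrt0 (by linarith) hx2l
    (by linarith) hx3 (by linarith)
  unfold Delta1 Delta2
  linear_combination hgap + hx1p + t * hr0p

/-- Proposition A.3: under the standing hypotheses (H), `Δ̃₁ ≥ (t-1)·Δ̃₂`. -/
theorem stmt7 (t p n : ℤ) (r0 rt0 x1 x2 x3 : ℝ)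
    (ht : 2 ≤ t) (hp : 3 ≤ p) (hpt : p ≤ t + 1) (hn : 1 ≤ n)
    (hrt0 : 0 < rt0) (hrt0' : rt0 ≤ (n : ℝ) * ((p : ℝ) - 1) / 2)
    (hr0 : r0 = (p : ℝ) * rt0 / ((p : ℝ) - 1))
    (hx1 : r0 ≤ x1)
    (hx2l : rt0 ≤ x2) (hx2u : x2 ≤ (n : ℝ) * (t : ℝ) * ((p : ℝ) - 1) - (t : ℝ) * rt0)
    (hx3 : rt0 ≤ x3)
    (hden1 : 0 < (n : ℝ) * ((p : ℝ) - 1) * ((p : ℝ) * t - t - 1) -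
      ((p : ℝ) * t - t + p - 2) * rt0 + x3)
    (hden2 : 0 < (n : ℝ) * p * ((p : ℝ) - 1) * rt0 - rt0 ^ 2 - (n : ℝ) * ((p : ℝ) - 1) * x3) :
    ((t : ℝ) - 1) * Delta2 n p t r0 rt0 x1 x2 x3 ≤ Delta1 n p t r0 rt0 x1 x2 x3 :=
  stmt7_general t p n r0 rt0 x1 x2 x3 ht hp hrt0 hrt0' hr0 hx1 hx2l hx2u hx3 hden2
end

section
/- (Proposition A.4) Under the standing hypotheses (H), if additionally r̃0 ≤ n(p−1)/(t+1), then (t(p−1) − 1)·Δ̃₁ ≥ t(t−1)(p−1)·Δ̃₂; equivalently, when Δ̃₂ > 0, Δ̃₁/((t−1)Δ̃₂) ≥ t(p−1)/(t(p−1)−1). -/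
set_option linter.unusedVariables false

/-!
Drop the nonnegative quotient in `Δ̃₂` and use `ξ₁ ≥ r₀` to bound `p (r₀ - ξ₁ / p)` by `p r̃₀`; in
`Δ̃₁`, enlarge the numerator of the quotient using `ξ₂ ≥ r̃₀` and shrink its denominator using
`ξ₃ ≥ r̃₀`. What remains is a polynomial inequality in `t`, `q = p - 1`, `m = n (p - 1)` and `r̃₀`:
after substituting `q = 2 + a`, `t = q + b` and `m = (t + 1) r̃₀ + w` with `a, b, w ≥ 0`, the
difference of its two sides has only nonnegative coefficients.
-/

theorem quotient_bound_nonneg {t q m u : ℝ} (hq : 2 ≤ q) (hqt : q ≤ t) (hu : 0 ≤ u)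
    (hum : (t + 1) * u ≤ m) :
    0 ≤ t * (t * q - 1) * m - (2 * t ^ 2 * q - t - 1) * u := by
  obtain ⟨a, ha, rfl⟩ : ∃ a, 0 ≤ a ∧ q = 2 + a := ⟨q - 2, by linarith, by ring⟩
  obtain ⟨b, hb, rfl⟩ : ∃ b, 0 ≤ b ∧ t = 2 + a + b := ⟨t - 2 - a, by linarith, by ring⟩
  obtain ⟨w, hw, rfl⟩ : ∃ w, 0 ≤ w ∧ m = w + (2 + a + b + 1) * u :=
    ⟨m - (2 + a + b + 1) * u, by linarith, by ring⟩
  ring_nf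
  positivity

theorem quotient_bound_polynomial {t q m u : ℝ} (hq : 2 ≤ q) (hqt : q ≤ t) (hu : 0 ≤ u)
    (hum : (t + 1) * u ≤ m) :
    (t * q - 1) * (t * m - (t + 1) * u) ^ 2 ≤
      (q + 1) * (t * (t * q - 1) * m - (2 * t ^ 2 * q - t - 1) * u) *
        ((t * q - 1) * m - (t * q + q - 2) * u) := by
  obtain ⟨a, ha, rfl⟩ : ∃ a, 0 ≤ a ∧ q = 2 + a := ⟨q - 2, by linarith, by ring⟩
  obtain ⟨b, hb, rfl⟩ : ∃ b, 0 ≤ b ∧ t = 2 + a + b := ⟨t - 2 - a, by linarith, by ring⟩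
  obtain ⟨w, hw, rfl⟩ : ∃ w, 0 ≤ w ∧ m = w + (2 + a + b + 1) * u :=
    ⟨m - (2 + a + b + 1) * u, by linarith, by ring⟩
  rw [← sub_nonneg]
  ring_nf
  positivity

theorem mul_quotient_Delta1_le {n p t u x2 x3 : ℝ} (hp : 3 ≤ p) (hpt : p ≤ t + 1) (hu : 0 ≤ u)
    (hsmall : (t + 1) * u ≤ n * (p - 1)) (hx2l : u ≤ x2)
    (hx2u : x2 ≤ n * t * (p - 1) - t * u) (hx3 : u ≤ x3)
    (hden : 0 < n * (p - 1) * (p * t - t - 1) - (p * t - t + p - 2) * u + x3) :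
    (t * (p - 1) - 1) * ((n * t * (p - 1) - t * u - x2) ^ 2 /
        (n * (p - 1) * (p * t - t - 1) - (p * t - t + p - 2) * u + x3)) ≤
      p * (t * (t * (p - 1) - 1) * (n * (p - 1)) - (2 * t ^ 2 * (p - 1) - t - 1) * u) := by
  have hq : 2 ≤ p - 1 := by linarith
  have hqt : p - 1 ≤ t := by linarith
  have hkey := quotient_bound_polynomial hq hqt hu hsmall
  have hK := quotient_bound_nonneg hq hqt hu hsmall
  have hnum : (n * t * (p - 1) - t * u - x2) ^ 2 ≤ (t * (n * (p - 1)) - (t + 1) * u) ^ 2 :=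
    pow_le_pow_left₀ (by linarith) (by linarith) 2
  rw [← mul_div_assoc, div_le_iff₀ hden]
  calc (t * (p - 1) - 1) * (n * t * (p - 1) - t * u - x2) ^ 2
      ≤ (t * (p - 1) - 1) * (t * (n * (p - 1)) - (t + 1) * u) ^ 2 :=
        mul_le_mul_of_nonneg_left hnum (by nlinarith)
    _ ≤ p * (t * (t * (p - 1) - 1) * (n * (p - 1)) - (2 * t ^ 2 * (p - 1) - t - 1) * u) *
          ((t * (p - 1) - 1) * (n * (p - 1)) - (t * (p - 1) + (p - 1) - 2) * u) := by
        convert hkey using 2; ring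
    _ ≤ _ := mul_le_mul_of_nonneg_left (by linarith) (mul_nonneg (by linarith) hK)

theorem mul_Delta2_le_mul_Delta1 {n p t u x1 x2 x3 : ℝ} (hp : 3 ≤ p) (hpt : p ≤ t + 1)
    (hu : 0 ≤ u) (hsmall : (t + 1) * u ≤ n * (p - 1)) (hx1 : p * u / (p - 1) ≤ x1)
    (hx2l : u ≤ x2) (hx2u : x2 ≤ n * t * (p - 1) - t * u) (hx3 : u ≤ x3)
    (hden1 : 0 < n * (p - 1) * (p * t - t - 1) - (p * t - t + p - 2) * u + x3)
    (hden2 : 0 < n * p * (p - 1) * u - u ^ 2 - n * (p - 1) * x3) :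
    t * (t - 1) * (p - 1) * Delta2 n p t (p * u / (p - 1)) u x1 x2 x3 ≤
      (t * (p - 1) - 1) * Delta1 n p t (p * u / (p - 1)) u x1 x2 x3 := by
  have hp1 : p - 1 ≠ 0 := by linarith
  have hquot₁ := mul_quotient_Delta1_le hp hpt hu hsmall hx2l hx2u hx3 hden1
  have hquot₂ : 0 ≤ n * (p - 1) * x2 ^ 2 / (n * p * (p - 1) * u - u ^ 2 - n * (p - 1) * x3) :=
    div_nonneg (mul_nonneg (by nlinarith) (sq_nonneg x2)) hden2.le
  have hP : p * (p * u / (p - 1) - x1 / p) ≤ p * u := by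
    have : p * (p * u / (p - 1) - x1 / p) = p * u + (p * u / (p - 1) - x1) := by
      field_simp
      ring
    linarith
  have hS : t * (p - 1) * (n * p - p * u / (p - 1)) = t * p * (n * (p - 1) - u) := by
    field_simp
  have hcoef1 : 0 ≤ t ^ 2 * (p - 1) - 1 := by nlinarith
  have hcoef2 : 0 ≤ t * (t - 1) * (p - 1) :=
    mul_nonneg (mul_nonneg (by linarith) (by linarith)) (by linarith)
  unfold Delta1 Delta2
  rw [hS]
  generalize p * (p * u / (p - 1) - x1 / p) = P at hP ⊢
  linear_combination mul_le_mul_of_nonneg_left hP hcoef1 + hquot₁ + mul_nonneg hcoef2 hquot₂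

theorem stmt8_general (t p n : ℤ) (r0 rt0 x1 x2 x3 : ℝ)
    (hp : 3 ≤ p) (hpt : p ≤ t + 1)
    (hrt0 : 0 < rt0)
    (hr0 : r0 = (p : ℝ) * rt0 / ((p : ℝ) - 1))
    (hx1 : r0 ≤ x1)
    (hx2l : rt0 ≤ x2) (hx2u : x2 ≤ (n : ℝ) * (t : ℝ) * ((p : ℝ) - 1) - (t : ℝ) * rt0)
    (hx3 : rt0 ≤ x3)
    (hden1 : 0 < (n : ℝ) * ((p : ℝ) - 1) * ((p : ℝ) * t - t - 1) -
      ((p : ℝ) * t - t + p - 2) * rt0 + x3)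
    (hden2 : 0 < (n : ℝ) * p * ((p : ℝ) - 1) * rt0 - rt0 ^ 2 - (n : ℝ) * ((p : ℝ) - 1) * x3)
    (hsmall : rt0 ≤ (n : ℝ) * ((p : ℝ) - 1) / ((t : ℝ) + 1)) :
    (t : ℝ) * ((t : ℝ) - 1) * ((p : ℝ) - 1) * Delta2 n p t r0 rt0 x1 x2 x3 ≤
        ((t : ℝ) * ((p : ℝ) - 1) - 1) * Delta1 n p t r0 rt0 x1 x2 x3 ∧
      (0 < Delta2 n p t r0 rt0 x1 x2 x3 →
        (t : ℝ) * ((p : ℝ) - 1) / ((t : ℝ) * ((p : ℝ) - 1) - 1) ≤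
          Delta1 n p t r0 rt0 x1 x2 x3 / (((t : ℝ) - 1) * Delta2 n p t r0 rt0 x1 x2 x3)) := by
  have hp' : (3 : ℝ) ≤ p := by exact_mod_cast hp
  have hpt' : (p : ℝ) ≤ t + 1 := by exact_mod_cast hpt
  rw [le_div_iff₀ (by linarith), mul_comm] at hsmall
  subst hr0
  have hmain := mul_Delta2_le_mul_Delta1 hp' hpt' hrt0.le hsmall hx1 hx2l hx2u hx3 hden1 hden2
  refine ⟨hmain, fun hpos => ?_⟩
  rw [div_le_div_iff₀ (by nlinarith) (mul_pos (by linarith) hpos)]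
  linarith

/-- Proposition A.4: under the standing hypotheses (H), if moreover
`r̃₀ ≤ n(p-1)/(t+1)`, then `(t(p-1)-1)·Δ̃₁ ≥ t(t-1)(p-1)·Δ̃₂`; equivalently, when
`Δ̃₂ > 0`, `Δ̃₁/((t-1)Δ̃₂) ≥ t(p-1)/(t(p-1)-1)`. -/
theorem stmt8 (t p n : ℤ) (r0 rt0 x1 x2 x3 : ℝ)
    (ht : 2 ≤ t) (hp : 3 ≤ p) (hpt : p ≤ t + 1) (hn : 1 ≤ n)
    (hrt0 : 0 < rt0) (hrt0' : rt0 ≤ (n : ℝ) * ((p : ℝ) - 1) / 2)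
    (hr0 : r0 = (p : ℝ) * rt0 / ((p : ℝ) - 1))
    (hx1 : r0 ≤ x1)
    (hx2l : rt0 ≤ x2) (hx2u : x2 ≤ (n : ℝ) * (t : ℝ) * ((p : ℝ) - 1) - (t : ℝ) * rt0)
    (hx3 : rt0 ≤ x3)
    (hden1 : 0 < (n : ℝ) * ((p : ℝ) - 1) * ((p : ℝ) * t - t - 1) -
      ((p : ℝ) * t - t + p - 2) * rt0 + x3)
    (hden2 : 0 < (n : ℝ) * p * ((p : ℝ) - 1) * rt0 - rt0 ^ 2 - (n : ℝ) * ((p : ℝ) - 1) * x3)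
    (hsmall : rt0 ≤ (n : ℝ) * ((p : ℝ) - 1) / ((t : ℝ) + 1)) :
    (t : ℝ) * ((t : ℝ) - 1) * ((p : ℝ) - 1) * Delta2 n p t r0 rt0 x1 x2 x3 ≤
        ((t : ℝ) * ((p : ℝ) - 1) - 1) * Delta1 n p t r0 rt0 x1 x2 x3 ∧
      (0 < Delta2 n p t r0 rt0 x1 x2 x3 →
        (t : ℝ) * ((p : ℝ) - 1) / ((t : ℝ) * ((p : ℝ) - 1) - 1) ≤
          Delta1 n p t r0 rt0 x1 x2 x3 / (((t : ℝ) - 1) * Delta2 n p t r0 rt0 x1 x2 x3)) :=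
  stmt8_general t p n r0 rt0 x1 x2 x3 hp hpt hrt0 hr0 hx1 hx2l hx2u hx3 hden1 hden2 hsmall
end

section
/- (Proposition A.5, inequality (A.9)) Under the standing hypotheses (H), one has Θ̃₁ ≥ 0 and (pt − t − 1)·Θ̃₁ ≤ t(p−1)·Θ̃₂. -/
/-!
Write `m = n(p-1)`, `a = pt - t - 1` and `r = r̃0`. Clearing the two positive denominators, the
second inequality reads `a·N·D₂ ≤ t(p-1)·m·ξ₂·D₁`, where `N` is the numerator of `Θ̃₁` and `D₁`,
`D₂` are the denominators of `Θ̃₁`, `Θ̃₂`. The left side decreases and the right side increases in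
`ξ₂` and `ξ₃`, so it suffices to check the corner `ξ₂ = ξ₃ = r`. There the difference of the two
sides is `r²·((m - 2r)·K + r·L)` with `K = (p-1)(t²-1) + (p-2)t` and
`L = (p-1)(t-1)² + (3p-4)(t-1)`, which is nonnegative because `m ≥ 2r`.
-/

set_option linter.unusedVariables false

section

variable {m p t r : ℝ}

theorem cleared_theta_ineq_corner (ht : 1 ≤ t) (hp : 2 ≤ p) (hr : 0 ≤ r) (hm : 2 * r ≤ m) :
    (p * t - t - 1) * (t * m - t * r - r) * (m * p * r - r ^ 2 - m * r) ≤
      t * (p - 1) * (m * r) * (m * (p * t - t - 1) - (p * t - t + p - 2) * r + r) := by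
  have hK : 0 ≤ (p - 1) * (t ^ 2 - 1) + (p - 2) * t := by nlinarith
  have hL : 0 ≤ (p - 1) * (t - 1) ^ 2 + (3 * p - 4) * (t - 1) := by nlinarith
  have hm' : 0 ≤ m - 2 * r := by linarith
  rw [← sub_nonneg]
  calc 0 ≤ r ^ 2 * ((m - 2 * r) * ((p - 1) * (t ^ 2 - 1) + (p - 2) * t) +
        r * ((p - 1) * (t - 1) ^ 2 + (3 * p - 4) * (t - 1))) := by positivity
    _ = _ := by ring

theorem cleared_theta_ineq {x₂ x₃ : ℝ} (ht : 1 ≤ t) (hp : 2 ≤ p) (hr : 0 ≤ r) (hm : 2 * r ≤ m)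
    (hx₂ : r ≤ x₂) (hx₃ : r ≤ x₃) (hd₂ : 0 ≤ m * p * r - r ^ 2 - m * x₃) :
    (p * t - t - 1) * (t * m - t * r - x₂) * (m * p * r - r ^ 2 - m * x₃) ≤
      t * (p - 1) * (m * x₂) * (m * (p * t - t - 1) - (p * t - t + p - 2) * r + x₃) := by
  have ha : 0 ≤ p * t - t - 1 := by nlinarith
  have hN : 0 ≤ t * m - t * r - r := by nlinarith
  have hd₁ : 0 ≤ m * (p * t - t - 1) - (p * t - t + p - 2) * r + r := by nlinarith
  calc (p * t - t - 1) * (t * m - t * r - x₂) * (m * p * r - r ^ 2 - m * x₃)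
      ≤ (p * t - t - 1) * (t * m - t * r - r) * (m * p * r - r ^ 2 - m * r) := by
        simpa only [mul_assoc] using
          mul_le_mul_of_nonneg_left (mul_le_mul (by linarith) (by nlinarith) hd₂ hN) ha
    _ ≤ t * (p - 1) * (m * r) * (m * (p * t - t - 1) - (p * t - t + p - 2) * r + r) :=
        cleared_theta_ineq_corner ht hp hr hm
    _ ≤ t * (p - 1) * (m * x₂) * (m * (p * t - t - 1) - (p * t - t + p - 2) * r + x₃) := by
        have : 0 ≤ m := by linarith
        have : 0 ≤ t * (p - 1) := by nlinarith
        have : 0 ≤ m * x₂ := by nlinarith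
        gcongr

end

theorem stmt9_general (t p n : ℤ) (r0 rt0 x1 x2 x3 : ℝ)
    (ht : 2 ≤ t) (hp : 3 ≤ p)
    (hrt0 : 0 < rt0) (hrt0' : rt0 ≤ (n : ℝ) * ((p : ℝ) - 1) / 2)
    (hx2l : rt0 ≤ x2) (hx2u : x2 ≤ (n : ℝ) * (t : ℝ) * ((p : ℝ) - 1) - (t : ℝ) * rt0)
    (hx3 : rt0 ≤ x3)
    (hden1 : 0 < (n : ℝ) * ((p : ℝ) - 1) * ((p : ℝ) * t - t - 1) -
      ((p : ℝ) * t - t + p - 2) * rt0 + x3)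
    (hden2 : 0 < (n : ℝ) * p * ((p : ℝ) - 1) * rt0 - rt0 ^ 2 - (n : ℝ) * ((p : ℝ) - 1) * x3) :
    0 ≤ Theta1 n p t r0 rt0 x1 x2 x3 ∧
      ((p : ℝ) * t - t - 1) * Theta1 n p t r0 rt0 x1 x2 x3 ≤
        (t : ℝ) * ((p : ℝ) - 1) * Theta2 n p t r0 rt0 x1 x2 x3 := by
  have htR : (1 : ℝ) ≤ t := by exact_mod_cast (by omega : 1 ≤ t)
  have hpR : (2 : ℝ) ≤ p := by exact_mod_cast (by omega : 2 ≤ p)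
  refine ⟨div_nonneg (by linarith) hden1.le, ?_⟩
  rw [Theta1, Theta2, mul_div_assoc', mul_div_assoc', div_le_div_iff₀ hden1 hden2]
  linear_combination
    cleared_theta_ineq (m := n * (p - 1)) htR hpR hrt0.le (by linarith) hx2l hx3 (by linarith)

/-- Proposition A.5, inequality (A.9): under the standing hypotheses (H),
`Θ̃₁ ≥ 0` and `(pt - t - 1)·Θ̃₁ ≤ t(p-1)·Θ̃₂`. -/
theorem stmt9 (t p n : ℤ) (r0 rt0 x1 x2 x3 : ℝ)
    (ht : 2 ≤ t) (hp : 3 ≤ p) (hpt : p ≤ t + 1) (hn : 1 ≤ n)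
    (hrt0 : 0 < rt0) (hrt0' : rt0 ≤ (n : ℝ) * ((p : ℝ) - 1) / 2)
    (hr0 : r0 = (p : ℝ) * rt0 / ((p : ℝ) - 1))
    (hx1 : r0 ≤ x1)
    (hx2l : rt0 ≤ x2) (hx2u : x2 ≤ (n : ℝ) * (t : ℝ) * ((p : ℝ) - 1) - (t : ℝ) * rt0)
    (hx3 : rt0 ≤ x3)
    (hden1 : 0 < (n : ℝ) * ((p : ℝ) - 1) * ((p : ℝ) * t - t - 1) -
      ((p : ℝ) * t - t + p - 2) * rt0 + x3)
    (hden2 : 0 < (n : ℝ) * p * ((p : ℝ) - 1) * rt0 - rt0 ^ 2 - (n : ℝ) * ((p : ℝ) - 1) * x3) :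
    0 ≤ Theta1 n p t r0 rt0 x1 x2 x3 ∧
      ((p : ℝ) * t - t - 1) * Theta1 n p t r0 rt0 x1 x2 x3 ≤
        (t : ℝ) * ((p : ℝ) - 1) * Theta2 n p t r0 rt0 x1 x2 x3 :=
  stmt9_general t p n r0 rt0 x1 x2 x3 ht hp hrt0 hrt0' hx2l hx2u hx3 hden1 hden2
end

section
/- (Proposition A.5, inequality (A.10)) Under the standing hypotheses (H), if additionally r̃0 ≥ n(p−1)/(t+1), then Θ̃₂ ≥ Θ̃₁. -/
set_option linter.unusedVariables false

/-!
Write `m = n(p-1)` and `r = r̃₀`. After cross-multiplying by the two positive denominators,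
`Θ̃₁ ≤ Θ̃₂` becomes the nonnegativity of a polynomial that factors as
`(m - r) * (m t (ξ₃ - r) + (m ((p-1) t - 1) + r) (ξ₂ - r) + r ((t+1) r - m))`.
Every factor and summand is nonnegative: `r ≤ m` because `r̃₀ ≤ n(p-1)/2`, and the last summand is
exactly where `r̃₀ ≥ n(p-1)/(t+1)` enters.
-/

theorem theta_cross_sub_eq (m p t r x2 x3 : ℝ) :
    m * x2 * (m * (p * t - t - 1) - (p * t - t + p - 2) * r + x3)
        - (m * t - t * r - x2) * (p * m * r - r ^ 2 - m * x3)
      = (m - r) * (m * t * (x3 - r) + (m * ((p - 1) * t - 1) + r) * (x2 - r)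
          + r * ((t + 1) * r - m)) := by
  ring

theorem theta_cross_sub_nonneg {m p t r x2 x3 : ℝ} (hr : 0 ≤ r) (hrm : r ≤ m) (ht : 0 ≤ t)
    (hpt : 1 ≤ (p - 1) * t) (hx2 : r ≤ x2) (hx3 : r ≤ x3) (hm : m ≤ (t + 1) * r) :
    0 ≤ m * x2 * (m * (p * t - t - 1) - (p * t - t + p - 2) * r + x3)
        - (m * t - t * r - x2) * (p * m * r - r ^ 2 - m * x3) := by
  rw [theta_cross_sub_eq]
  have hm0 : 0 ≤ m := hr.trans hrm
  refine mul_nonneg (sub_nonneg.2 hrm) (add_nonneg (add_nonneg ?_ ?_) ?_)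
  · exact mul_nonneg (mul_nonneg hm0 ht) (sub_nonneg.2 hx3)
  · exact mul_nonneg (add_nonneg (mul_nonneg hm0 (sub_nonneg.2 hpt)) hr) (sub_nonneg.2 hx2)
  · exact mul_nonneg hr (sub_nonneg.2 hm)

theorem Theta1_le_Theta2 {n p t r0 rt0 x1 x2 x3 : ℝ} (hrt0 : 0 ≤ rt0)
    (hrm : rt0 ≤ n * (p - 1)) (ht : 0 ≤ t) (hpt : 1 ≤ (p - 1) * t) (hx2 : rt0 ≤ x2)
    (hx3 : rt0 ≤ x3) (hbig : n * (p - 1) ≤ (t + 1) * rt0)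
    (hden1 : 0 < n * (p - 1) * (p * t - t - 1) - (p * t - t + p - 2) * rt0 + x3)
    (hden2 : 0 < n * p * (p - 1) * rt0 - rt0 ^ 2 - n * (p - 1) * x3) :
    Theta1 n p t r0 rt0 x1 x2 x3 ≤ Theta2 n p t r0 rt0 x1 x2 x3 := by
  rw [Theta1, Theta2, div_le_div_iff₀ hden1 hden2, ← sub_nonneg]
  refine (theta_cross_sub_nonneg (p := p) hrt0 hrm ht hpt hx2 hx3 hbig).trans_eq ?_
  ring

theorem stmt10_general (t p n : ℤ) (r0 rt0 x1 x2 x3 : ℝ)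
    (ht : 2 ≤ t) (hp : 3 ≤ p)
    (hrt0 : 0 < rt0) (hrt0' : rt0 ≤ (n : ℝ) * ((p : ℝ) - 1) / 2)
    (hx2l : rt0 ≤ x2)
    (hx3 : rt0 ≤ x3)
    (hden1 : 0 < (n : ℝ) * ((p : ℝ) - 1) * ((p : ℝ) * t - t - 1) -
      ((p : ℝ) * t - t + p - 2) * rt0 + x3)
    (hden2 : 0 < (n : ℝ) * p * ((p : ℝ) - 1) * rt0 - rt0 ^ 2 - (n : ℝ) * ((p : ℝ) - 1) * x3)
    (hbig : (n : ℝ) * ((p : ℝ) - 1) / ((t : ℝ) + 1) ≤ rt0) :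
    Theta1 n p t r0 rt0 x1 x2 x3 ≤ Theta2 n p t r0 rt0 x1 x2 x3 := by
  have hT : (2 : ℝ) ≤ t := by exact_mod_cast ht
  have hP : (3 : ℝ) ≤ p := by exact_mod_cast hp
  rw [div_le_iff₀ (by linarith)] at hbig
  exact Theta1_le_Theta2 hrt0.le (by linarith) (by linarith) (by nlinarith) hx2l hx3
    (by linarith) hden1 hden2

/-- Proposition A.5, inequality (A.10): under the standing hypotheses (H), if moreover
`r̃₀ ≥ n(p-1)/(t+1)`, then `Θ̃₂ ≥ Θ̃₁`. -/
theorem stmt10 (t p n : ℤ) (r0 rt0 x1 x2 x3 : ℝ)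
    (ht : 2 ≤ t) (hp : 3 ≤ p) (hpt : p ≤ t + 1) (hn : 1 ≤ n)
    (hrt0 : 0 < rt0) (hrt0' : rt0 ≤ (n : ℝ) * ((p : ℝ) - 1) / 2)
    (hr0 : r0 = (p : ℝ) * rt0 / ((p : ℝ) - 1))
    (hx1 : r0 ≤ x1)
    (hx2l : rt0 ≤ x2) (hx2u : x2 ≤ (n : ℝ) * (t : ℝ) * ((p : ℝ) - 1) - (t : ℝ) * rt0)
    (hx3 : rt0 ≤ x3)
    (hden1 : 0 < (n : ℝ) * ((p : ℝ) - 1) * ((p : ℝ) * t - t - 1) -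
      ((p : ℝ) * t - t + p - 2) * rt0 + x3)
    (hden2 : 0 < (n : ℝ) * p * ((p : ℝ) - 1) * rt0 - rt0 ^ 2 - (n : ℝ) * ((p : ℝ) - 1) * x3)
    (hbig : (n : ℝ) * ((p : ℝ) - 1) / ((t : ℝ) + 1) ≤ rt0) :
    Theta1 n p t r0 rt0 x1 x2 x3 ≤ Theta2 n p t r0 rt0 x1 x2 x3 :=
  stmt10_general t p n r0 rt0 x1 x2 x3 ht hp hrt0 hrt0' hx2l hx3 hden1 hden2 hbig
end

section
/- (Key monotonicity step in Lemma 5) Define H(ξ1, ξ2, ξ3) = t(t−1)²p/Δ̃₁ + tp/Δ̃₂. Suppose both triples (ξ1, ξ2, ξ3) and (ξ1′, ξ2′, ξ3′) satisfy the standing hypotheses (H) with the same n, p, t, r0, r̃0, that ξ1 ≤ ξ1′, ξ2 ≤ ξ2′, ξ3 ≤ ξ3′, and that Δ̃₂ evaluated at (ξ1′, ξ2′, ξ3′) is positive. Then H(ξ1, ξ2, ξ3) ≤ H(ξ1′, ξ2′, ξ3′). -/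
/-
Pass from `(ξ₁, ξ₂, ξ₃)` to `(ξ₁', ξ₂', ξ₃')` one coordinate at a time. Along each move `Δ̃₁`
increases by `d * u` and `Δ̃₂` decreases by `d * v`, where `d ≥ 0` is the increment of the
coordinate and `(u, v)` is `(1, 1)`, `(Θ̃₁ + Θ̃₁', Θ̃₂ + Θ̃₂')` or `(Θ̃₁ Θ̃₁', Θ̃₂ Θ̃₂')`; so `H` does
not decrease as soon as `(t - 1)² u Δ̃₂ Δ̃₂' ≤ v Δ̃₁ Δ̃₁'`. This follows from the pointwise
inequalities `(t - 1) Δ̃₂ ≤ Δ̃₁` and `(t - 1) Θ̃₁ Δ̃₂ ≤ Θ̃₂ Δ̃₁`. In each of them both sides move in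
the favourable direction as `ξ` grows, so it suffices to prove them at the corner
`ξ = (r₀, r̃₀, r̃₀)`, where they reduce to polynomial inequalities in `n (p - 1)`, `p`, `t`, `r̃₀`.
-/

set_option linter.unusedVariables false

/-- The quantity `H` from the proof of Lemma 5. -/
noncomputable def Hfun (n p t r0 rt0 x1 x2 x3 : ℝ) : ℝ :=
  t * (t - 1) ^ 2 * p / Delta1 n p t r0 rt0 x1 x2 x3 +
    t * p / Delta2 n p t r0 rt0 x1 x2 x3

-- The two corner inequalities with denominators cleared (`m = n (p - 1)`, `s = r̃₀`). After the
-- substitution below, all coefficients in `a, c, e ≥ 0` and `s` are nonnegative.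
theorem corner_poly_nonneg₁ {m p t s : ℝ} (hs : 0 ≤ s) (hm : 2 * s ≤ m) (hp : 3 ≤ p)
    (hpt : p ≤ t + 1) :
    0 ≤ t * p * (m - 2 * s) * (m * (p * t - t - 1) - (p * t - t + p - 2) * s + s)
        * (m * (p - 1) - s)
      - (t * m - (t + 1) * s) ^ 2 * (m * (p - 1) - s)
      + (t - 1) * m * s * (m * (p * t - t - 1) - (p * t - t + p - 2) * s + s) := by
  obtain ⟨a, ha, rfl⟩ : ∃ a, 0 ≤ a ∧ m = a + 2 * s := ⟨m - 2 * s, by linarith, by ring⟩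
  obtain ⟨c, hc, rfl⟩ : ∃ c, 0 ≤ c ∧ p = c + 3 := ⟨p - 3, by linarith, by ring⟩
  obtain ⟨e, he, rfl⟩ : ∃ e, 0 ≤ e ∧ t = e + c + 2 := ⟨t - c - 2, by linarith, by ring⟩
  ring_nf
  positivity

theorem corner_poly_nonneg₂ {m p t s : ℝ} (hs : 0 ≤ s) (hm : 2 * s ≤ m) (hp : 3 ≤ p)
    (hpt : p ≤ t + 1) :
    0 ≤ m * ((t * p * (m - s) - p * s) * (m * (p * t - t - 1) - (p * t - t + p - 2) * s + s)
        - (t * m - (t + 1) * s) ^ 2)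
      - (t - 1) * (t * m - (t + 1) * s) * s * (p * (m * (p - 1) - s) - m) := by
  obtain ⟨a, ha, rfl⟩ : ∃ a, 0 ≤ a ∧ m = a + 2 * s := ⟨m - 2 * s, by linarith, by ring⟩
  obtain ⟨c, hc, rfl⟩ : ∃ c, 0 ≤ c ∧ p = c + 3 := ⟨p - 3, by linarith, by ring⟩
  obtain ⟨e, he, rfl⟩ : ∃ e, 0 ≤ e ∧ t = e + c + 2 := ⟨t - c - 2, by linarith, by ring⟩
  ring_nf
  positivity

section

variable {n p t r0 rt0 x1 x2 x3 y1 y2 y3 : ℝ}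

theorem Delta1_le_Delta1 (hp : 0 ≤ p)
    (h1 : x1 ≤ y1) (h2 : x2 ≤ y2) (hy2 : y2 ≤ n * t * (p - 1) - t * rt0) (h3 : x3 ≤ y3)
    (hD : 0 < n * (p - 1) * (p * t - t - 1) - (p * t - t + p - 2) * rt0 + x3) :
    Delta1 n p t r0 rt0 x1 x2 x3 ≤ Delta1 n p t r0 rt0 y1 y2 y3 := by
  unfold Delta1
  gcongr

theorem Delta2_le_Delta2 (hp : 0 ≤ p) (hm : 0 ≤ n * (p - 1))
    (h1 : x1 ≤ y1) (hx2 : 0 ≤ x2) (h2 : x2 ≤ y2) (h3 : x3 ≤ y3)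
    (hD : 0 < n * p * (p - 1) * rt0 - rt0 ^ 2 - n * (p - 1) * y3) :
    Delta2 n p t r0 rt0 y1 y2 y3 ≤ Delta2 n p t r0 rt0 x1 x2 x3 := by
  unfold Delta2
  gcongr

theorem Theta1_le_Theta1 (h2 : x2 ≤ y2) (hx2 : x2 ≤ n * t * (p - 1) - t * rt0) (h3 : x3 ≤ y3)
    (hD : 0 < n * (p - 1) * (p * t - t - 1) - (p * t - t + p - 2) * rt0 + x3) :
    Theta1 n p t r0 rt0 y1 y2 y3 ≤ Theta1 n p t r0 rt0 x1 x2 x3 := by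
  unfold Theta1
  gcongr

theorem Theta2_le_Theta2 (hm : 0 ≤ n * (p - 1))
    (hx2 : 0 ≤ x2) (h2 : x2 ≤ y2) (h3 : x3 ≤ y3)
    (hD : 0 < n * p * (p - 1) * rt0 - rt0 ^ 2 - n * (p - 1) * y3) :
    Theta2 n p t r0 rt0 x1 x2 x3 ≤ Theta2 n p t r0 rt0 y1 y2 y3 := by
  unfold Theta2
  gcongr
  exact mul_nonneg hm (hx2.trans h2)

theorem Delta1_sub_Delta1_x1 (hp : p ≠ 0) :
    Delta1 n p t r0 rt0 y1 x2 x3 - Delta1 n p t r0 rt0 x1 x2 x3 = y1 - x1 := by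
  unfold Delta1; field_simp; ring

theorem Delta2_sub_Delta2_x1 (hp : p ≠ 0) :
    Delta2 n p t r0 rt0 x1 x2 x3 - Delta2 n p t r0 rt0 y1 x2 x3 = y1 - x1 := by
  unfold Delta2; field_simp; ring

theorem Delta1_sub_Delta1_x2 :
    Delta1 n p t r0 rt0 x1 y2 x3 - Delta1 n p t r0 rt0 x1 x2 x3 =
      (y2 - x2) * (Theta1 n p t r0 rt0 x1 x2 x3 + Theta1 n p t r0 rt0 x1 y2 x3) := by
  unfold Delta1 Theta1; field_simp; ring

theorem Delta2_sub_Delta2_x2 :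
    Delta2 n p t r0 rt0 x1 x2 x3 - Delta2 n p t r0 rt0 x1 y2 x3 =
      (y2 - x2) * (Theta2 n p t r0 rt0 x1 x2 x3 + Theta2 n p t r0 rt0 x1 y2 x3) := by
  unfold Delta2 Theta2; field_simp; ring

theorem Delta1_sub_Delta1_x3
    (hDx : n * (p - 1) * (p * t - t - 1) - (p * t - t + p - 2) * rt0 + x3 ≠ 0)
    (hDy : n * (p - 1) * (p * t - t - 1) - (p * t - t + p - 2) * rt0 + y3 ≠ 0) :
    Delta1 n p t r0 rt0 x1 x2 y3 - Delta1 n p t r0 rt0 x1 x2 x3 =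
      (y3 - x3) * (Theta1 n p t r0 rt0 x1 x2 x3 * Theta1 n p t r0 rt0 x1 x2 y3) := by
  have hyx : y3 - x3 = (n * (p - 1) * (p * t - t - 1) - (p * t - t + p - 2) * rt0 + y3) -
      (n * (p - 1) * (p * t - t - 1) - (p * t - t + p - 2) * rt0 + x3) := by ring
  unfold Delta1 Theta1
  rw [hyx]
  generalize n * (p - 1) * (p * t - t - 1) - (p * t - t + p - 2) * rt0 + x3 = A at *
  generalize n * (p - 1) * (p * t - t - 1) - (p * t - t + p - 2) * rt0 + y3 = B at *
  field_simp
  ring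

theorem Delta2_sub_Delta2_x3 (hDx : n * p * (p - 1) * rt0 - rt0 ^ 2 - n * (p - 1) * x3 ≠ 0)
    (hDy : n * p * (p - 1) * rt0 - rt0 ^ 2 - n * (p - 1) * y3 ≠ 0) :
    Delta2 n p t r0 rt0 x1 x2 x3 - Delta2 n p t r0 rt0 x1 x2 y3 =
      (y3 - x3) * (Theta2 n p t r0 rt0 x1 x2 x3 * Theta2 n p t r0 rt0 x1 x2 y3) := by
  have hyx : n * (p - 1) * (y3 - x3) = (n * p * (p - 1) * rt0 - rt0 ^ 2 - n * (p - 1) * x3) -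
      (n * p * (p - 1) * rt0 - rt0 ^ 2 - n * (p - 1) * y3) := by ring
  unfold Delta2 Theta2
  generalize n * p * (p - 1) * rt0 - rt0 ^ 2 - n * (p - 1) * x3 = A at *
  generalize n * p * (p - 1) * rt0 - rt0 ^ 2 - n * (p - 1) * y3 = B at *
  field_simp
  linear_combination -(n * (p - 1) * x2 ^ 2) * hyx

theorem Hfun_le_Hfun (ht : 0 ≤ t) (hp : 0 ≤ p)
    (ha : 0 < Delta1 n p t r0 rt0 x1 x2 x3) (ha' : 0 < Delta1 n p t r0 rt0 y1 y2 y3)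
    (hb : 0 < Delta2 n p t r0 rt0 x1 x2 x3) (hb' : 0 < Delta2 n p t r0 rt0 y1 y2 y3)
    (h : (t - 1) ^ 2 * (Delta1 n p t r0 rt0 y1 y2 y3 - Delta1 n p t r0 rt0 x1 x2 x3) *
        (Delta2 n p t r0 rt0 x1 x2 x3 * Delta2 n p t r0 rt0 y1 y2 y3) ≤
      (Delta2 n p t r0 rt0 x1 x2 x3 - Delta2 n p t r0 rt0 y1 y2 y3) *
        (Delta1 n p t r0 rt0 x1 x2 x3 * Delta1 n p t r0 rt0 y1 y2 y3)) :
    Hfun n p t r0 rt0 x1 x2 x3 ≤ Hfun n p t r0 rt0 y1 y2 y3 := by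
  unfold Hfun
  generalize Delta1 n p t r0 rt0 x1 x2 x3 = a at *
  generalize Delta1 n p t r0 rt0 y1 y2 y3 = a' at *
  generalize Delta2 n p t r0 rt0 x1 x2 x3 = b at *
  generalize Delta2 n p t r0 rt0 y1 y2 y3 = b' at *
  have key : t * (t - 1) ^ 2 * p / a' + t * p / b' - (t * (t - 1) ^ 2 * p / a + t * p / b) =
      t * p * ((b - b') * (a * a') - (t - 1) ^ 2 * (a' - a) * (b * b')) / (a * a' * (b * b')) := by
    field_simp
    ring
  have : 0 ≤ t * p * ((b - b') * (a * a') - (t - 1) ^ 2 * (a' - a) * (b * b')) /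
      (a * a' * (b * b')) := by
    have := sub_nonneg.2 h
    positivity
  linarith

structure ParamHyp (n p t r0 rt0 : ℝ) : Prop where
  two_le_t : 2 ≤ t
  three_le_p : 3 ≤ p
  p_le_t_add_one : p ≤ t + 1
  rt0_pos : 0 < rt0
  rt0_le : rt0 ≤ n * (p - 1) / 2
  r0_eq : r0 = p * rt0 / (p - 1)

namespace ParamHyp

variable (h : ParamHyp n p t r0 rt0)
include h

theorem two_mul_rt0_le : 2 * rt0 ≤ n * (p - 1) := by linarith [h.rt0_le]

theorem mul_sub_one_pos : 0 < n * (p - 1) := by linarith [h.rt0_pos, h.two_mul_rt0_le]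

theorem den1_pos (hx3 : rt0 ≤ x3) :
    0 < n * (p - 1) * (p * t - t - 1) - (p * t - t + p - 2) * rt0 + x3 := by
  obtain ⟨ht, hp, -, hs, hsm, -⟩ := h
  have hm : 0 ≤ n * (p - 1) - 2 * rt0 := by linarith
  have ht' : 0 ≤ p * t - t - 1 := by nlinarith
  have : 0 < rt0 * ((p - 1) * (t - 1)) := mul_pos hs (mul_pos (by linarith) (by linarith))
  nlinarith [mul_nonneg hm ht']

theorem corner_den_pos : 0 < n * (p - 1) * (p - 1) - rt0 := by
  nlinarith [h.mul_sub_one_pos, h.rt0_le, h.three_le_p]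

theorem den2_corner_pos : 0 < n * p * (p - 1) * rt0 - rt0 ^ 2 - n * (p - 1) * rt0 := by
  have := mul_pos h.rt0_pos h.corner_den_pos
  linarith

theorem p_pos : 0 < p := by linarith [h.three_le_p]

theorem sub_one_nonneg : 0 ≤ t - 1 := by linarith [h.two_le_t]

theorem sub_one_mul_Delta2_le_Delta1_corner :
    (t - 1) * Delta2 n p t r0 rt0 r0 rt0 rt0 ≤ Delta1 n p t r0 rt0 r0 rt0 rt0 := by
  have hD := h.den1_pos le_rfl
  have hM := h.corner_den_pos
  have hp0 : p ≠ 0 := h.p_pos.ne'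
  have hp1 : p - 1 ≠ 0 := by linarith [h.three_le_p]
  have hs : rt0 ≠ 0 := h.rt0_pos.ne'
  have key : Delta1 n p t r0 rt0 r0 rt0 rt0 - (t - 1) * Delta2 n p t r0 rt0 r0 rt0 rt0 =
      (t * p * (n * (p - 1) - 2 * rt0)
          * (n * (p - 1) * (p * t - t - 1) - (p * t - t + p - 2) * rt0 + rt0)
          * (n * (p - 1) * (p - 1) - rt0)
        - (t * (n * (p - 1)) - (t + 1) * rt0) ^ 2 * (n * (p - 1) * (p - 1) - rt0)
        + (t - 1) * (n * (p - 1)) * rt0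
          * (n * (p - 1) * (p * t - t - 1) - (p * t - t + p - 2) * rt0 + rt0)) /
      ((n * (p - 1) * (p * t - t - 1) - (p * t - t + p - 2) * rt0 + rt0)
        * (n * (p - 1) * (p - 1) - rt0)) := by
    have hD2 : n * p * (p - 1) * rt0 - rt0 ^ 2 - n * (p - 1) * rt0 =
        rt0 * (n * (p - 1) * (p - 1) - rt0) := by ring
    rw [h.r0_eq]
    unfold Delta1 Delta2
    rw [hD2]
    generalize n * (p - 1) * (p * t - t - 1) - (p * t - t + p - 2) * rt0 + rt0 = D at *
    generalize n * (p - 1) * (p - 1) - rt0 = M at *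
    field_simp
    ring
  rw [← sub_nonneg, key]
  exact div_nonneg
    (corner_poly_nonneg₁ h.rt0_pos.le h.two_mul_rt0_le h.three_le_p h.p_le_t_add_one)
    (by positivity)

theorem sub_one_mul_Theta1_mul_Delta2_le_corner :
    (t - 1) * Theta1 n p t r0 rt0 r0 rt0 rt0 * Delta2 n p t r0 rt0 r0 rt0 rt0 ≤
      Theta2 n p t r0 rt0 r0 rt0 rt0 * Delta1 n p t r0 rt0 r0 rt0 rt0 := by
  have hD := h.den1_pos le_rfl
  have hM := h.corner_den_pos
  have hp0 : p ≠ 0 := h.p_pos.ne'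
  have hp1 : p - 1 ≠ 0 := by linarith [h.three_le_p]
  have hs : rt0 ≠ 0 := h.rt0_pos.ne'
  have key : Theta2 n p t r0 rt0 r0 rt0 rt0 * Delta1 n p t r0 rt0 r0 rt0 rt0 -
        (t - 1) * Theta1 n p t r0 rt0 r0 rt0 rt0 * Delta2 n p t r0 rt0 r0 rt0 rt0 =
      (n * (p - 1) * ((t * p * (n * (p - 1) - rt0) - p * rt0)
            * (n * (p - 1) * (p * t - t - 1) - (p * t - t + p - 2) * rt0 + rt0)
          - (t * (n * (p - 1)) - (t + 1) * rt0) ^ 2)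
        - (t - 1) * (t * (n * (p - 1)) - (t + 1) * rt0) * rt0
          * (p * (n * (p - 1) * (p - 1) - rt0) - n * (p - 1))) /
      ((n * (p - 1) * (p * t - t - 1) - (p * t - t + p - 2) * rt0 + rt0)
        * (n * (p - 1) * (p - 1) - rt0)) := by
    have hD2 : n * p * (p - 1) * rt0 - rt0 ^ 2 - n * (p - 1) * rt0 =
        rt0 * (n * (p - 1) * (p - 1) - rt0) := by ring
    rw [h.r0_eq]
    unfold Delta1 Delta2 Theta1 Theta2
    rw [hD2]
    generalize n * (p - 1) * (p * t - t - 1) - (p * t - t + p - 2) * rt0 + rt0 = D at *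
    generalize n * (p - 1) * (p - 1) - rt0 = M at *
    field_simp
    ring
  rw [← sub_nonneg, key]
  exact div_nonneg
    (corner_poly_nonneg₂ h.rt0_pos.le h.two_mul_rt0_le h.three_le_p h.p_le_t_add_one)
    (by positivity)

end ParamHyp

structure StandingHyp (n p t r0 rt0 x1 x2 x3 : ℝ) : Prop extends ParamHyp n p t r0 rt0 where
  r0_le_x1 : r0 ≤ x1
  rt0_le_x2 : rt0 ≤ x2
  x2_le : x2 ≤ n * t * (p - 1) - t * rt0
  rt0_le_x3 : rt0 ≤ x3
  den2_pos : 0 < n * p * (p - 1) * rt0 - rt0 ^ 2 - n * (p - 1) * x3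

namespace StandingHyp

section

variable (h : StandingHyp n p t r0 rt0 x1 x2 x3)
include h

theorem den1_pos : 0 < n * (p - 1) * (p * t - t - 1) - (p * t - t + p - 2) * rt0 + x3 :=
  h.toParamHyp.den1_pos h.rt0_le_x3

theorem Delta2_le_Delta2_corner :
    Delta2 n p t r0 rt0 x1 x2 x3 ≤ Delta2 n p t r0 rt0 r0 rt0 rt0 :=
  Delta2_le_Delta2 h.p_pos.le h.mul_sub_one_pos.le h.r0_le_x1 h.rt0_pos.le h.rt0_le_x2
    h.rt0_le_x3 h.den2_pos

theorem Delta1_corner_le_Delta1 :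
    Delta1 n p t r0 rt0 r0 rt0 rt0 ≤ Delta1 n p t r0 rt0 x1 x2 x3 :=
  Delta1_le_Delta1 h.p_pos.le h.r0_le_x1 h.rt0_le_x2 h.x2_le h.rt0_le_x3
    (h.toParamHyp.den1_pos le_rfl)

theorem sub_one_mul_Delta2_le_Delta1 :
    (t - 1) * Delta2 n p t r0 rt0 x1 x2 x3 ≤ Delta1 n p t r0 rt0 x1 x2 x3 :=
  calc (t - 1) * Delta2 n p t r0 rt0 x1 x2 x3
      ≤ (t - 1) * Delta2 n p t r0 rt0 r0 rt0 rt0 :=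
        mul_le_mul_of_nonneg_left h.Delta2_le_Delta2_corner h.sub_one_nonneg
    _ ≤ Delta1 n p t r0 rt0 r0 rt0 rt0 := h.sub_one_mul_Delta2_le_Delta1_corner
    _ ≤ Delta1 n p t r0 rt0 x1 x2 x3 := h.Delta1_corner_le_Delta1

theorem Delta1_pos (hΔ : 0 < Delta2 n p t r0 rt0 x1 x2 x3) :
    0 < Delta1 n p t r0 rt0 x1 x2 x3 :=
  (mul_pos (by linarith [h.two_le_t]) hΔ).trans_le h.sub_one_mul_Delta2_le_Delta1

theorem Theta1_nonneg : 0 ≤ Theta1 n p t r0 rt0 x1 x2 x3 :=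
  div_nonneg (by linarith [h.x2_le]) h.den1_pos.le

theorem Theta2_nonneg : 0 ≤ Theta2 n p t r0 rt0 x1 x2 x3 :=
  div_nonneg (mul_nonneg h.mul_sub_one_pos.le (h.rt0_pos.le.trans h.rt0_le_x2)) h.den2_pos.le

theorem sub_one_mul_Theta1_mul_Delta2_le (hΔ : 0 < Delta2 n p t r0 rt0 x1 x2 x3) :
    (t - 1) * Theta1 n p t r0 rt0 x1 x2 x3 * Delta2 n p t r0 rt0 x1 x2 x3 ≤
      Theta2 n p t r0 rt0 x1 x2 x3 * Delta1 n p t r0 rt0 x1 x2 x3 := by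
  have ht := h.sub_one_nonneg
  have hΘ1 : Theta1 n p t r0 rt0 x1 x2 x3 ≤ Theta1 n p t r0 rt0 r0 rt0 rt0 :=
    Theta1_le_Theta1 h.rt0_le_x2 (h.rt0_le_x2.trans h.x2_le) h.rt0_le_x3
      (h.toParamHyp.den1_pos le_rfl)
  have hΘ2 : Theta2 n p t r0 rt0 r0 rt0 rt0 ≤ Theta2 n p t r0 rt0 x1 x2 x3 :=
    Theta2_le_Theta2 h.mul_sub_one_pos.le h.rt0_pos.le h.rt0_le_x2 h.rt0_le_x3 h.den2_pos
  have hΔc : 0 ≤ Delta1 n p t r0 rt0 r0 rt0 rt0 :=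
    (mul_nonneg ht (hΔ.le.trans h.Delta2_le_Delta2_corner)).trans
      h.sub_one_mul_Delta2_le_Delta1_corner
  calc (t - 1) * Theta1 n p t r0 rt0 x1 x2 x3 * Delta2 n p t r0 rt0 x1 x2 x3
      ≤ (t - 1) * Theta1 n p t r0 rt0 r0 rt0 rt0 * Delta2 n p t r0 rt0 r0 rt0 rt0 := by
        gcongr
        · exact mul_nonneg ht (h.Theta1_nonneg.trans hΘ1)
        · exact h.Delta2_le_Delta2_corner
    _ ≤ Theta2 n p t r0 rt0 r0 rt0 rt0 * Delta1 n p t r0 rt0 r0 rt0 rt0 :=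
        h.sub_one_mul_Theta1_mul_Delta2_le_corner
    _ ≤ Theta2 n p t r0 rt0 x1 x2 x3 * Delta1 n p t r0 rt0 x1 x2 x3 :=
        mul_le_mul hΘ2 h.Delta1_corner_le_Delta1 hΔc h.Theta2_nonneg

end

theorem Delta2_pos_of_le (hx : StandingHyp n p t r0 rt0 x1 x2 x3)
    (hy : StandingHyp n p t r0 rt0 y1 y2 y3) (h1 : x1 ≤ y1) (h2 : x2 ≤ y2) (h3 : x3 ≤ y3)
    (hΔ : 0 < Delta2 n p t r0 rt0 y1 y2 y3) : 0 < Delta2 n p t r0 rt0 x1 x2 x3 :=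
  hΔ.trans_le <| Delta2_le_Delta2 hx.p_pos.le hx.mul_sub_one_pos.le h1
    (hx.rt0_pos.le.trans hx.rt0_le_x2) h2 h3 hy.den2_pos

theorem Hfun_le_Hfun_x1 (hx : StandingHyp n p t r0 rt0 x1 x2 x3)
    (hy : StandingHyp n p t r0 rt0 y1 x2 x3) (h1 : x1 ≤ y1)
    (hΔ : 0 < Delta2 n p t r0 rt0 y1 x2 x3) :
    Hfun n p t r0 rt0 x1 x2 x3 ≤ Hfun n p t r0 rt0 y1 x2 x3 := by
  have hΔx := hx.Delta2_pos_of_le hy h1 le_rfl le_rfl hΔ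
  have ht := hx.sub_one_nonneg
  refine Hfun_le_Hfun (by linarith) hx.p_pos.le (hx.Delta1_pos hΔx) (hy.Delta1_pos hΔ)
    hΔx hΔ ?_
  rw [Delta1_sub_Delta1_x1 hx.p_pos.ne', Delta2_sub_Delta2_x1 hx.p_pos.ne']
  calc (t - 1) ^ 2 * (y1 - x1) *
        (Delta2 n p t r0 rt0 x1 x2 x3 * Delta2 n p t r0 rt0 y1 x2 x3)
      = (y1 - x1) * ((t - 1) * Delta2 n p t r0 rt0 x1 x2 x3 *
          ((t - 1) * Delta2 n p t r0 rt0 y1 x2 x3)) := by ring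
    _ ≤ (y1 - x1) * (Delta1 n p t r0 rt0 x1 x2 x3 * Delta1 n p t r0 rt0 y1 x2 x3) :=
        mul_le_mul_of_nonneg_left
          (mul_le_mul hx.sub_one_mul_Delta2_le_Delta1 hy.sub_one_mul_Delta2_le_Delta1
            (mul_nonneg ht hΔ.le) (hx.Delta1_pos hΔx).le)
          (sub_nonneg.2 h1)

theorem Hfun_le_Hfun_x2 (hx : StandingHyp n p t r0 rt0 x1 x2 x3)
    (hy : StandingHyp n p t r0 rt0 x1 y2 x3) (h2 : x2 ≤ y2)
    (hΔ : 0 < Delta2 n p t r0 rt0 x1 y2 x3) :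
    Hfun n p t r0 rt0 x1 x2 x3 ≤ Hfun n p t r0 rt0 x1 y2 x3 := by
  have hΔx := hx.Delta2_pos_of_le hy le_rfl h2 le_rfl hΔ
  have ht := hx.sub_one_nonneg
  refine Hfun_le_Hfun (by linarith) hx.p_pos.le (hx.Delta1_pos hΔx) (hy.Delta1_pos hΔ)
    hΔx hΔ ?_
  rw [Delta1_sub_Delta1_x2, Delta2_sub_Delta2_x2]
  calc (t - 1) ^ 2 *
        ((y2 - x2) * (Theta1 n p t r0 rt0 x1 x2 x3 + Theta1 n p t r0 rt0 x1 y2 x3)) *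
        (Delta2 n p t r0 rt0 x1 x2 x3 * Delta2 n p t r0 rt0 x1 y2 x3)
      = (y2 - x2) *
          ((t - 1) * Theta1 n p t r0 rt0 x1 x2 x3 * Delta2 n p t r0 rt0 x1 x2 x3 *
              ((t - 1) * Delta2 n p t r0 rt0 x1 y2 x3) +
            (t - 1) * Theta1 n p t r0 rt0 x1 y2 x3 * Delta2 n p t r0 rt0 x1 y2 x3 *
              ((t - 1) * Delta2 n p t r0 rt0 x1 x2 x3)) := by ring
    _ ≤ (y2 - x2) *
          (Theta2 n p t r0 rt0 x1 x2 x3 * Delta1 n p t r0 rt0 x1 x2 x3 *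
              Delta1 n p t r0 rt0 x1 y2 x3 +
            Theta2 n p t r0 rt0 x1 y2 x3 * Delta1 n p t r0 rt0 x1 y2 x3 *
              Delta1 n p t r0 rt0 x1 x2 x3) :=
        mul_le_mul_of_nonneg_left (add_le_add
          (mul_le_mul (hx.sub_one_mul_Theta1_mul_Delta2_le hΔx) hy.sub_one_mul_Delta2_le_Delta1
            (mul_nonneg ht hΔ.le) (mul_nonneg hx.Theta2_nonneg (hx.Delta1_pos hΔx).le))
          (mul_le_mul (hy.sub_one_mul_Theta1_mul_Delta2_le hΔ) hx.sub_one_mul_Delta2_le_Delta1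
            (mul_nonneg ht hΔx.le) (mul_nonneg hy.Theta2_nonneg (hy.Delta1_pos hΔ).le)))
          (sub_nonneg.2 h2)
    _ = _ := by ring

theorem Hfun_le_Hfun_x3 (hx : StandingHyp n p t r0 rt0 x1 x2 x3)
    (hy : StandingHyp n p t r0 rt0 x1 x2 y3) (h3 : x3 ≤ y3)
    (hΔ : 0 < Delta2 n p t r0 rt0 x1 x2 y3) :
    Hfun n p t r0 rt0 x1 x2 x3 ≤ Hfun n p t r0 rt0 x1 x2 y3 := by
  have hΔx := hx.Delta2_pos_of_le hy le_rfl le_rfl h3 hΔ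
  have ht := hx.sub_one_nonneg
  refine Hfun_le_Hfun (by linarith) hx.p_pos.le (hx.Delta1_pos hΔx) (hy.Delta1_pos hΔ)
    hΔx hΔ ?_
  rw [Delta1_sub_Delta1_x3 hx.den1_pos.ne' hy.den1_pos.ne',
    Delta2_sub_Delta2_x3 hx.den2_pos.ne' hy.den2_pos.ne']
  calc (t - 1) ^ 2 *
        ((y3 - x3) * (Theta1 n p t r0 rt0 x1 x2 x3 * Theta1 n p t r0 rt0 x1 x2 y3)) *
        (Delta2 n p t r0 rt0 x1 x2 x3 * Delta2 n p t r0 rt0 x1 x2 y3)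
      = (y3 - x3) *
          ((t - 1) * Theta1 n p t r0 rt0 x1 x2 x3 * Delta2 n p t r0 rt0 x1 x2 x3 *
            ((t - 1) * Theta1 n p t r0 rt0 x1 x2 y3 * Delta2 n p t r0 rt0 x1 x2 y3)) := by ring
    _ ≤ (y3 - x3) *
          (Theta2 n p t r0 rt0 x1 x2 x3 * Delta1 n p t r0 rt0 x1 x2 x3 *
            (Theta2 n p t r0 rt0 x1 x2 y3 * Delta1 n p t r0 rt0 x1 x2 y3)) :=
        mul_le_mul_of_nonneg_left
          (mul_le_mul (hx.sub_one_mul_Theta1_mul_Delta2_le hΔx)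
            (hy.sub_one_mul_Theta1_mul_Delta2_le hΔ)
            (mul_nonneg (mul_nonneg ht hy.Theta1_nonneg) hΔ.le)
            (mul_nonneg hx.Theta2_nonneg (hx.Delta1_pos hΔx).le))
          (sub_nonneg.2 h3)
    _ = _ := by ring

end StandingHyp

end

theorem stmt13_general (t p n : ℤ) (r0 rt0 x1 x2 x3 x1' x2' x3' : ℝ)
    (ht : 2 ≤ t) (hp : 3 ≤ p) (hpt : p ≤ t + 1)
    (hrt0 : 0 < rt0) (hrt0' : rt0 ≤ (n : ℝ) * ((p : ℝ) - 1) / 2)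
    (hr0 : r0 = (p : ℝ) * rt0 / ((p : ℝ) - 1))
    (hx1 : r0 ≤ x1)
    (hx2l : rt0 ≤ x2) (hx2u : x2 ≤ (n : ℝ) * (t : ℝ) * ((p : ℝ) - 1) - (t : ℝ) * rt0)
    (hx3 : rt0 ≤ x3)
    (hden2 : 0 < (n : ℝ) * p * ((p : ℝ) - 1) * rt0 - rt0 ^ 2 - (n : ℝ) * ((p : ℝ) - 1) * x3)
    (hx1' : r0 ≤ x1')
    (hx2l' : rt0 ≤ x2') (hx2u' : x2' ≤ (n : ℝ) * (t : ℝ) * ((p : ℝ) - 1) - (t : ℝ) * rt0)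
    (hx3' : rt0 ≤ x3')
    (hden2' : 0 < (n : ℝ) * p * ((p : ℝ) - 1) * rt0 - rt0 ^ 2 - (n : ℝ) * ((p : ℝ) - 1) * x3')
    (hle1 : x1 ≤ x1') (hle2 : x2 ≤ x2') (hle3 : x3 ≤ x3')
    (hpos : 0 < Delta2 n p t r0 rt0 x1' x2' x3') :
    Hfun n p t r0 rt0 x1 x2 x3 ≤ Hfun n p t r0 rt0 x1' x2' x3' := by
  have hP : ParamHyp n p t r0 rt0 :=
    ⟨by exact_mod_cast ht, by exact_mod_cast hp, by exact_mod_cast hpt, hrt0, hrt0', hr0⟩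
  have h₀ : StandingHyp n p t r0 rt0 x1 x2 x3 := ⟨hP, hx1, hx2l, hx2u, hx3, hden2⟩
  have h₁ : StandingHyp n p t r0 rt0 x1' x2 x3 := ⟨hP, hx1', hx2l, hx2u, hx3, hden2⟩
  have h₂ : StandingHyp n p t r0 rt0 x1' x2' x3 := ⟨hP, hx1', hx2l', hx2u', hx3, hden2⟩
  have h₃ : StandingHyp n p t r0 rt0 x1' x2' x3' := ⟨hP, hx1', hx2l', hx2u', hx3', hden2'⟩
  calc Hfun n p t r0 rt0 x1 x2 x3
      ≤ Hfun n p t r0 rt0 x1' x2 x3 :=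
        h₀.Hfun_le_Hfun_x1 h₁ hle1 (h₁.Delta2_pos_of_le h₃ le_rfl hle2 hle3 hpos)
    _ ≤ Hfun n p t r0 rt0 x1' x2' x3 :=
        h₁.Hfun_le_Hfun_x2 h₂ hle2 (h₂.Delta2_pos_of_le h₃ le_rfl le_rfl hle3 hpos)
    _ ≤ Hfun n p t r0 rt0 x1' x2' x3' := h₂.Hfun_le_Hfun_x3 h₃ hle3 hpos

/-- Key monotonicity step in Lemma 5: if two triples `(ξ₁, ξ₂, ξ₃) ≤ (ξ₁', ξ₂', ξ₃')`
(componentwise) both satisfy the standing hypotheses (H) with the same `n, p, t, r₀, r̃₀`,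
and `Δ̃₂` at the larger triple is positive, then `H(ξ₁, ξ₂, ξ₃) ≤ H(ξ₁', ξ₂', ξ₃')`. -/
theorem stmt13 (t p n : ℤ) (r0 rt0 x1 x2 x3 x1' x2' x3' : ℝ)
    (ht : 2 ≤ t) (hp : 3 ≤ p) (hpt : p ≤ t + 1) (hn : 1 ≤ n)
    (hrt0 : 0 < rt0) (hrt0' : rt0 ≤ (n : ℝ) * ((p : ℝ) - 1) / 2)
    (hr0 : r0 = (p : ℝ) * rt0 / ((p : ℝ) - 1))
    (hx1 : r0 ≤ x1)
    (hx2l : rt0 ≤ x2) (hx2u : x2 ≤ (n : ℝ) * (t : ℝ) * ((p : ℝ) - 1) - (t : ℝ) * rt0)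
    (hx3 : rt0 ≤ x3)
    (hden1 : 0 < (n : ℝ) * ((p : ℝ) - 1) * ((p : ℝ) * t - t - 1) -
      ((p : ℝ) * t - t + p - 2) * rt0 + x3)
    (hden2 : 0 < (n : ℝ) * p * ((p : ℝ) - 1) * rt0 - rt0 ^ 2 - (n : ℝ) * ((p : ℝ) - 1) * x3)
    (hx1' : r0 ≤ x1')
    (hx2l' : rt0 ≤ x2') (hx2u' : x2' ≤ (n : ℝ) * (t : ℝ) * ((p : ℝ) - 1) - (t : ℝ) * rt0)
    (hx3' : rt0 ≤ x3')
    (hden1' : 0 < (n : ℝ) * ((p : ℝ) - 1) * ((p : ℝ) * t - t - 1) -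
      ((p : ℝ) * t - t + p - 2) * rt0 + x3')
    (hden2' : 0 < (n : ℝ) * p * ((p : ℝ) - 1) * rt0 - rt0 ^ 2 - (n : ℝ) * ((p : ℝ) - 1) * x3')
    (hle1 : x1 ≤ x1') (hle2 : x2 ≤ x2') (hle3 : x3 ≤ x3')
    (hpos : 0 < Delta2 n p t r0 rt0 x1' x2' x3') :
    Hfun n p t r0 rt0 x1 x2 x3 ≤ Hfun n p t r0 rt0 x1' x2' x3' :=
  stmt13_general t p n r0 rt0 x1 x2 x3 x1' x2' x3' ht hp hpt hrt0 hrt0' hr0 hx1 hx2l hx2u hx3 hden2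
    hx1' hx2l' hx2u' hx3' hden2' hle1 hle2 hle3 hpos
end

section
/- (Core inequality in the proof of Proposition A.3) Let t, p be integers with t ≥ 2 and 3 ≤ p ≤ t+1, and let x be a real number with 0 ≤ x ≤ (p−1)/2. Then (p−1)(pt−t−1) − (pt−t+p−3)x > 0, and g(x) > 0, where g(x) = [t(2p−1−2x)(2p−3−2x) + 4(t−1)x/(p−1)]·[(p−1)(pt−t−1) − (pt−t+p−3)x] − 4(t(p−1) − (t+1)x)². -/
/-!
Put `q = p - 1` and `V = p - 1 - 2x`, so that `x = (q - V)/2` and `V ≥ 0`. Then twice the linear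
factor is `q²(t - 1) + (qt + q - 2)V`, and `2q·g` is a cubic in `V` whose coefficients, written in
`q - 2 ≥ 0` and `t - q ≥ 0`, are polynomials with nonnegative coefficients and positive constant
term.
-/

namespace PropositionA3

open scoped NNReal

noncomputable def linearFactor (t p x : ℝ) : ℝ :=
  (p - 1) * (p * t - t - 1) - (p * t - t + p - 3) * x

noncomputable def g (t p x : ℝ) : ℝ :=
  (t * (2 * p - 1 - 2 * x) * (2 * p - 3 - 2 * x) + 4 * (t - 1) * x / (p - 1)) *
      linearFactor t p x - 4 * (t * (p - 1) - (t + 1) * x) ^ 2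

def cubic (q t V : ℝ) : ℝ :=
  t * q * (q * t + q - 2) * V ^ 3
    + (t * q ^ 3 * (t - 1) + (2 * t * q ^ 2 - 2 * t + 2) * (q * t + q - 2)
        - 2 * q * (t + 1) ^ 2) * V ^ 2
    + q * (q * (t - 1) * (2 * t * q ^ 2 - 2 * t + 2) + (t * q ^ 2 + t - 2) * (q * t + q - 2)
        - 4 * q * (t ^ 2 - 1)) * V
    + q ^ 3 * t * (t - 1) * (q ^ 2 - 1)

theorem two_mul_linearFactor_eq (t q V : ℝ) :
    2 * linearFactor t (q + 1) ((q - V) / 2) = q ^ 2 * (t - 1) + (q * t + q - 2) * V := by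
  unfold linearFactor
  ring

theorem two_mul_g_eq (t V : ℝ) {q : ℝ} (hq : q ≠ 0) :
    2 * q * g t (q + 1) ((q - V) / 2) = cubic q t V := by
  unfold g linearFactor cubic
  rw [add_sub_cancel_right]
  field_simp
  ring

theorem cubic_pos {q t V : ℝ} (hq : 2 ≤ q) (hqt : q ≤ t) (hV : 0 ≤ V) : 0 < cubic q t V := by
  obtain ⟨b, hb, rfl⟩ : ∃ b, 0 ≤ b ∧ q = 2 + b := ⟨q - 2, by linarith, by ring⟩
  obtain ⟨c, hc, rfl⟩ : ∃ c, 0 ≤ c ∧ t = 2 + b + c := ⟨t - 2 - b, by linarith, by ring⟩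
  lift b to ℝ≥0 using hb
  lift c to ℝ≥0 using hc
  lift V to ℝ≥0 using hV
  unfold cubic
  ring_nf
  positivity

theorem linearFactor_pos {t p x : ℝ} (hp : 3 ≤ p) (hpt : p ≤ t + 1) (hx : x ≤ (p - 1) / 2) :
    0 < linearFactor t p x := by
  obtain ⟨q, V, rfl, rfl⟩ : ∃ q V, p = q + 1 ∧ x = (q - V) / 2 :=
    ⟨p - 1, p - 1 - 2 * x, by ring, by ring⟩
  have hq : 2 ≤ q := by linarith
  have h : 0 < 2 * linearFactor t (q + 1) ((q - V) / 2) := by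
    rw [two_mul_linearFactor_eq]
    exact add_pos_of_pos_of_nonneg (mul_pos (by positivity) (by linarith))
      (mul_nonneg (by nlinarith) (by linarith))
  exact pos_of_mul_pos_right h zero_le_two

theorem g_pos {t p x : ℝ} (hp : 3 ≤ p) (hpt : p ≤ t + 1) (hx : x ≤ (p - 1) / 2) :
    0 < g t p x := by
  obtain ⟨q, V, rfl, rfl⟩ : ∃ q V, p = q + 1 ∧ x = (q - V) / 2 :=
    ⟨p - 1, p - 1 - 2 * x, by ring, by ring⟩
  have hq : 2 ≤ q := by linarith
  have h : 0 < 2 * q * g t (q + 1) ((q - V) / 2) := by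
    rw [two_mul_g_eq t V (by positivity)]
    exact cubic_pos hq (by linarith) (by linarith)
  exact pos_of_mul_pos_right h (by positivity)

end PropositionA3

theorem stmt14_general (t p : ℤ) (hp : 3 ≤ p) (hpt : p ≤ t + 1)
    (x : ℝ) (hx : x ≤ ((p : ℝ) - 1) / 2) :
    0 < ((p : ℝ) - 1) * ((p : ℝ) * t - t - 1) - ((p : ℝ) * t - t + p - 3) * x ∧
      0 < ((t : ℝ) * (2 * (p : ℝ) - 1 - 2 * x) * (2 * (p : ℝ) - 3 - 2 * x) +
              4 * ((t : ℝ) - 1) * x / ((p : ℝ) - 1)) *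
            (((p : ℝ) - 1) * ((p : ℝ) * t - t - 1) - ((p : ℝ) * t - t + p - 3) * x) -
          4 * ((t : ℝ) * ((p : ℝ) - 1) - ((t : ℝ) + 1) * x) ^ 2 := by
  have hp' : (3 : ℝ) ≤ p := by exact_mod_cast hp
  have hpt' : (p : ℝ) ≤ t + 1 := by exact_mod_cast hpt
  exact ⟨PropositionA3.linearFactor_pos hp' hpt' hx, PropositionA3.g_pos hp' hpt' hx⟩

/-- Core inequality in the proof of Proposition A.3: for integers `t ≥ 2`,
`3 ≤ p ≤ t+1` and a real `x` with `0 ≤ x ≤ (p-1)/2`, the quantity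
`(p-1)(pt-t-1) - (pt-t+p-3)x` is positive and `g(x) > 0`, where
`g(x) = [t(2p-1-2x)(2p-3-2x) + 4(t-1)x/(p-1)]·[(p-1)(pt-t-1) - (pt-t+p-3)x]
        - 4(t(p-1) - (t+1)x)²`. -/
theorem stmt14 (t p : ℤ) (ht : 2 ≤ t) (hp : 3 ≤ p) (hpt : p ≤ t + 1)
    (x : ℝ) (hx0 : 0 ≤ x) (hx : x ≤ ((p : ℝ) - 1) / 2) :
    0 < ((p : ℝ) - 1) * ((p : ℝ) * t - t - 1) - ((p : ℝ) * t - t + p - 3) * x ∧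
      0 < ((t : ℝ) * (2 * (p : ℝ) - 1 - 2 * x) * (2 * (p : ℝ) - 3 - 2 * x) +
              4 * ((t : ℝ) - 1) * x / ((p : ℝ) - 1)) *
            (((p : ℝ) - 1) * ((p : ℝ) * t - t - 1) - ((p : ℝ) * t - t + p - 3) * x) -
          4 * ((t : ℝ) * ((p : ℝ) - 1) - ((t : ℝ) + 1) * x) ^ 2 :=
  stmt14_general t p hp hpt x hx
end
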